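/- arXiv:2308.15083 — 9 statements merged into one kernel-verified Lean document; each statement's English description precedes it below -/
import Mathlib

section
/- Let d ≥ 1 and g > 0. Let z_b : ℝ^d → ℝ, η : ℝ × ℝ^d → ℝ be C² functions and let u : ℝ × ℝ^d × ℝ → ℝ^d, w : ℝ × ℝ^d × ℝ → ℝ be C² functions satisfying, for all (t,x,z) ∈ ℝ × ℝ^d × ℝ, the hydrostatic Euler equations ∂_t u + (u·∇_x)u + w ∂_z u + g ∇_x η = 0 and ∇_x·u + ∂_z w = 0. Let φ : ℝ × ℝ^d × [0,1] → ℝ be a C² function satisfying ∂_t φ(t,x,λ) + u(t,x,φ(t,x,λ))·∇_x φ(t,x,λ) = w(t,x,φ(t,x,λ)) for all (t,x,λ), together with φ(t,x,0) = z_b(x) and φ(t,x,1) = η(t,x). Then the functions H(t,x,λ) := ∂_λ φ(t,x,λ) and ũ(t,x,λ) := u(t,x,φ(t,x,λ)) satisfy, for all (t,x,λ) ∈ ℝ × ℝ^d × (0,1), the semi-Lagrangian system ∂_t H + ∇_x·(H ũ) = 0 and ∂_t ũ + (ũ·∇_x)ũ + g ∇_x ∫₀¹ H(t,x,λ') dλ'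 = −g ∇_x z_b. -/
/-!
Mass: differentiating the transport equation `φ_t + ũ·∇φ = w(φ)` in `λ` and commuting the
derivatives of `φ` gives `(∂_t + ũ·∇)H = H (∂_z w - u_z·∇φ)` at `z = φ`. Since
`∇·(Hũ) = ũ·∇H + H ∇·ũ` and, by the chain rule, `∇·ũ = ∇·u + u_z·∇φ`, the sum
`∂_t H + ∇·(Hũ)` equals `H (∂_z w + ∇·u) = 0`.

Momentum: by the chain rule `(∂_t + ũ·∇)ũ = (∂_t + u·∇)u + (φ_t + ũ·∇φ) u_z`, which is
`(∂_t + u·∇ + w ∂_z)u = -g∇η` at `z = φ`, while `∫₀¹ H dλ = φ(1) - φ(0) = η - z_b`.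
-/

open ContinuousLinearMap

section Slices

variable {E G M : Type*} [NormedAddCommGroup E] [NormedSpace ℝ E] [NormedAddCommGroup G]
  [NormedSpace ℝ G] [NormedAddCommGroup M] [NormedSpace ℝ M] {t : ℝ} {x : E}

theorem hasDerivAt_slice_fst {f : ℝ → E → G → M} {z : G}
    (hf : DifferentiableAt ℝ ↿f (t, x, z)) :
    HasDerivAt (fun s => f s x z) (fderiv ℝ ↿f (t, x, z) (1, 0, 0)) t := by
  have h := hf.hasFDerivAt.comp_hasDerivAt t ((hasDerivAt_id t).prodMk (hasDerivAt_const t (x, z)))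
  rw [← Prod.mk_zero_zero] at h
  exact h

theorem hasFDerivAt_slice_snd {f : ℝ → E → G → M} {z : G}
    (hf : DifferentiableAt ℝ ↿f (t, x, z)) :
    HasFDerivAt (fun y => f t y z)
      (fderiv ℝ ↿f (t, x, z) ∘L (0 : E →L[ℝ] ℝ).prod ((ContinuousLinearMap.id ℝ E).prod 0)) x :=
  HasFDerivAt.comp x (f := fun y => (t, y, z)) hf.hasFDerivAt
    ((hasFDerivAt_const t x).prodMk ((hasFDerivAt_id x).prodMk (hasFDerivAt_const z x)))

theorem hasDerivAt_slice_thd {f : ℝ → E → ℝ → M} {z : ℝ}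
    (hf : DifferentiableAt ℝ ↿f (t, x, z)) :
    HasDerivAt (fun ζ => f t x ζ) (fderiv ℝ ↿f (t, x, z) (0, 0, 1)) z := by
  exact hf.hasFDerivAt.comp_hasDerivAt z
    ((hasDerivAt_const z t).prodMk ((hasDerivAt_const z x).prodMk (hasDerivAt_id z)))

theorem fderiv_slice_snd_apply {f : ℝ → E → G → M} {z : G}
    (hf : DifferentiableAt ℝ ↿f (t, x, z)) (v : E) :
    fderiv ℝ (fun y => f t y z) x v = fderiv ℝ ↿f (t, x, z) (0, v, 0) := by
  simp [(hasFDerivAt_slice_snd hf).fderiv]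

theorem deriv_slice_fst_add_fderiv_slice_snd {f : ℝ → E → G → M} {z : G}
    (hf : DifferentiableAt ℝ ↿f (t, x, z)) (v : E) :
    deriv (fun s => f s x z) t + fderiv ℝ (fun y => f t y z) x v
      = fderiv ℝ ↿f (t, x, z) (1, v, 0) := by
  rw [(hasDerivAt_slice_fst hf).deriv, fderiv_slice_snd_apply hf, ← map_add]
  simp

theorem integral_deriv_slice_thd [CompleteSpace M] {f : ℝ → E → ℝ → M} (hf : ContDiff ℝ 1 ↿f)
    (a b : ℝ) : ∫ m in a..b, deriv (fun ζ => f t x ζ) m = f t x b - f t x a := by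
  have hslice : ContDiff ℝ 1 (fun ζ => f t x ζ) :=
    hf.comp (contDiff_const.prodMk (contDiff_const.prodMk contDiff_id))
  exact intervalIntegral.integral_deriv_eq_sub (fun m _ => hslice.differentiable one_ne_zero m)
    ((hslice.continuous_deriv le_rfl).intervalIntegrable a b)

end Slices

section VerticalLift

variable {E M : Type*} [NormedAddCommGroup E] [NormedSpace ℝ E] [NormedAddCommGroup M]
  [NormedSpace ℝ M] {φ : ℝ × E × ℝ → ℝ} {p : ℝ × E × ℝ}

/-- The semi-Lagrangian change of variable `(t, x, λ) ↦ (t, x, φ(t, x, λ))`, so that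
`ũ = u ∘ verticalLift φ`. -/
def verticalLift (φ : ℝ × E × ℝ → ℝ) (p : ℝ × E × ℝ) : ℝ × E × ℝ := (p.1, p.2.1, φ p)

theorem hasFDerivAt_verticalLift {φ' : ℝ × E × ℝ →L[ℝ] ℝ} (hφ : HasFDerivAt φ φ' p) :
    HasFDerivAt (verticalLift φ)
      ((fst ℝ ℝ (E × ℝ)).prod ((fst ℝ E ℝ ∘L snd ℝ ℝ (E × ℝ)).prod φ')) p :=
  hasFDerivAt_fst.prodMk ((hasFDerivAt_fst.comp p hasFDerivAt_snd).prodMk hφ)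

theorem DifferentiableAt.comp_verticalLift {f : ℝ × E × ℝ → M}
    (hf : DifferentiableAt ℝ f (verticalLift φ p)) (hφ : DifferentiableAt ℝ φ p) :
    DifferentiableAt ℝ (f ∘ verticalLift φ) p :=
  hf.comp p (hasFDerivAt_verticalLift hφ.hasFDerivAt).differentiableAt

theorem fderiv_comp_verticalLift_apply {f : ℝ × E × ℝ → M}
    (hf : DifferentiableAt ℝ f (verticalLift φ p)) (hφ : DifferentiableAt ℝ φ p)
    (v : ℝ × E × ℝ) :
    fderiv ℝ (f ∘ verticalLift φ) p v
      = fderiv ℝ f (verticalLift φ p) (v.1, v.2.1, 0)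
        + fderiv ℝ φ p v • fderiv ℝ f (verticalLift φ p) (0, 0, 1) := by
  rw [(hf.hasFDerivAt.comp p (hasFDerivAt_verticalLift hφ.hasFDerivAt)).fderiv, ← map_smul,
    ← map_add]
  simp

end VerticalLift

section Divergence

variable {ι : Type*} [Fintype ι] [DecidableEq ι]

theorem sum_smul_apply_single {M : Type*} [NormedAddCommGroup M] [NormedSpace ℝ M]
    (L : EuclideanSpace ℝ ι →L[ℝ] M) (v : EuclideanSpace ℝ ι) :
    ∑ i, v i • L (EuclideanSpace.single i 1) = L v := by
  conv_rhs => rw [← (EuclideanSpace.basisFun ι ℝ).sum_repr v]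
  simp [map_sum, map_smul]

theorem sum_fderiv_mul_apply_single {h : EuclideanSpace ℝ ι → ℝ}
    {V : EuclideanSpace ℝ ι → EuclideanSpace ℝ ι} {x : EuclideanSpace ℝ ι}
    (hh : DifferentiableAt ℝ h x) (hV : DifferentiableAt ℝ V x) :
    ∑ i, fderiv ℝ (fun y => h y * V y i) x (EuclideanSpace.single i 1)
      = fderiv ℝ h x (V x) + h x * ∑ i, fderiv ℝ V x (EuclideanSpace.single i 1) i := by
  have hV_apply (i : ι) :
      HasFDerivAt (fun y => V y i) (EuclideanSpace.proj i ∘L fderiv ℝ V x) x :=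
    (EuclideanSpace.proj (𝕜 := ℝ) i).hasFDerivAt.comp x hV.hasFDerivAt
  rw [← sum_smul_apply_single (fderiv ℝ h x) (V x), Finset.mul_sum, ← Finset.sum_add_distrib]
  refine Finset.sum_congr rfl fun i _ => ?_
  rw [(hh.hasFDerivAt.fun_mul (hV_apply i)).fderiv]
  simp [add_comm]

end Divergence

section Transport

variable {E : Type*} [NormedAddCommGroup E] [NormedSpace ℝ E] {Φ W : ℝ × E × ℝ → ℝ}
  {U : ℝ × E × ℝ → E}

/-- The `λ`-derivative of the transport identity `∂_{(1, ũ, 0)} Φ = W ∘ verticalLift Φ`. -/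
theorem fderiv_fderiv_thd_of_transport (hΦ : ContDiff ℝ 2 Φ) (hU : Differentiable ℝ U)
    (hW : Differentiable ℝ W)
    (htransport : ∀ p, fderiv ℝ Φ p (1, U (verticalLift Φ p), 0) = W (verticalLift Φ p))
    (p : ℝ × E × ℝ) :
    fderiv ℝ (fderiv ℝ Φ) p (0, 0, 1) (1, U (verticalLift Φ p), 0)
      + fderiv ℝ Φ p (0, 0, 1) * fderiv ℝ Φ p (0, fderiv ℝ U (verticalLift Φ p) (0, 0, 1), 0)
      = fderiv ℝ Φ p (0, 0, 1) * fderiv ℝ W (verticalLift Φ p) (0, 0, 1) := by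
  have hΦd : Differentiable ℝ Φ := hΦ.differentiable two_ne_zero
  have hDΦ : Differentiable ℝ (fderiv ℝ Φ) :=
    (hΦ.fderiv_right (m := 1) le_rfl).differentiable one_ne_zero
  have hlhs := (hDΦ p).hasFDerivAt.clm_apply ((hasFDerivAt_const (1 : ℝ) p).prodMk
    (((hU _).comp_verticalLift (hΦd p)).hasFDerivAt.prodMk (hasFDerivAt_const (0 : ℝ) p)))
  have hrhs : HasFDerivAt (W ∘ verticalLift Φ) _ p :=
    hlhs.congr_of_eventuallyEq (.of_forall fun y => (htransport y).symm)
  have key := fderiv_comp_verticalLift_apply (hW _) (hΦd p) (0, 0, 1)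
  rw [hrhs.fderiv] at key
  have hsmul (c : ℝ) (v : E) : ((0 : ℝ), c • v, (0 : ℝ)) = c • ((0 : ℝ), v, (0 : ℝ)) := by simp
  simp only [add_apply, comp_apply, prod_apply, zero_apply, flip_apply, Function.comp_apply,
    fderiv_comp_verticalLift_apply (hU _) (hΦd p), Prod.mk_zero_zero, map_zero, zero_add,
    hsmul, map_smul, smul_eq_mul] at key
  linarith

end Transport

section Mass

variable {ι : Type*} [Fintype ι] [DecidableEq ι] {Φ W : ℝ × EuclideanSpace ℝ ι × ℝ → ℝ}
  {U : ℝ × EuclideanSpace ℝ ι × ℝ → EuclideanSpace ℝ ι}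

theorem mass_conservation_of_transport (hΦ : ContDiff ℝ 2 Φ) (hU : Differentiable ℝ U)
    (hW : Differentiable ℝ W)
    (htransport : ∀ p, fderiv ℝ Φ p (1, U (verticalLift Φ p), 0) = W (verticalLift Φ p))
    (p : ℝ × EuclideanSpace ℝ ι × ℝ)
    (hincomp : ∑ i, fderiv ℝ U (verticalLift Φ p) (0, EuclideanSpace.single i 1, 0) i
      + fderiv ℝ W (verticalLift Φ p) (0, 0, 1) = 0) :
    fderiv ℝ (fun q => fderiv ℝ Φ q (0, 0, 1)) p (1, U (verticalLift Φ p), 0)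
      + fderiv ℝ Φ p (0, 0, 1)
        * ∑ i, fderiv ℝ (U ∘ verticalLift Φ) p (0, EuclideanSpace.single i 1, 0) i = 0 := by
  have hΦd : Differentiable ℝ Φ := hΦ.differentiable two_ne_zero
  have hDΦ : Differentiable ℝ (fderiv ℝ Φ) :=
    (hΦ.fderiv_right (m := 1) le_rfl).differentiable one_ne_zero
  have hH : fderiv ℝ (fun q => fderiv ℝ Φ q (0, 0, 1)) p (1, U (verticalLift Φ p), 0)
      = fderiv ℝ (fderiv ℝ Φ) p (0, 0, 1) (1, U (verticalLift Φ p), 0) := by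
    rw [((hDΦ p).hasFDerivAt.clm_apply (hasFDerivAt_const _ p)).fderiv]
    simpa using (hΦ.contDiffAt.isSymmSndFDerivAt (by simp)).eq _ _
  have hdiv : ∑ i, fderiv ℝ (U ∘ verticalLift Φ) p (0, EuclideanSpace.single i 1, 0) i
      = ∑ i, fderiv ℝ U (verticalLift Φ p) (0, EuclideanSpace.single i 1, 0) i
        + fderiv ℝ Φ p (0, fderiv ℝ U (verticalLift Φ p) (0, 0, 1), 0) := by
    simp only [fderiv_comp_verticalLift_apply (hU _) (hΦd p), PiLp.add_apply, PiLp.smul_apply,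
      Finset.sum_add_distrib]
    congr 1
    convert sum_smul_apply_single (fderiv ℝ Φ p ∘L
      (0 : EuclideanSpace ℝ ι →L[ℝ] ℝ).prod ((ContinuousLinearMap.id ℝ _).prod 0))
      (fderiv ℝ U (verticalLift Φ p) (0, 0, 1)) using 1 <;> simp [mul_comm]
  rw [hH, hdiv]
  linear_combination fderiv_fderiv_thd_of_transport hΦ hU hW htransport p
    + fderiv ℝ Φ p (0, 0, 1) * hincomp

end Mass

theorem gradient_fun_sub {E : Type*} [NormedAddCommGroup E] [InnerProductSpace ℝ E]
    [CompleteSpace E] {f h : E → ℝ} {x : E} (hf : DifferentiableAt ℝ f x)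
    (hh : DifferentiableAt ℝ h x) :
    gradient (fun y => f y - h y) x = gradient f x - gradient h x := by
  simp only [gradient, fderiv_fun_sub hf hh, map_sub]

theorem fderiv_uncurry_apply_of_transport {E : Type*} [NormedAddCommGroup E] [NormedSpace ℝ E]
    {φ w : ℝ → E → ℝ → ℝ} {u : ℝ → E → ℝ → E} (hφ : Differentiable ℝ ↿φ)
    (htransport : ∀ t x l, deriv (fun s => φ s x l) t
      + fderiv ℝ (fun y => φ t y l) x (u t x (φ t x l)) = w t x (φ t x l))
    (p : ℝ × E × ℝ) :
    fderiv ℝ ↿φ p (1, ↿u (verticalLift ↿φ p), 0) = ↿w (verticalLift ↿φ p) := by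
  obtain ⟨t, x, l⟩ := p
  rw [← deriv_slice_fst_add_fderiv_slice_snd (hφ _)]
  exact htransport t x l

theorem mass_equation {ι : Type*} [Fintype ι] [DecidableEq ι]
    {φ w : ℝ → EuclideanSpace ℝ ι → ℝ → ℝ}
    {u : ℝ → EuclideanSpace ℝ ι → ℝ → EuclideanSpace ℝ ι}
    (hφ : ContDiff ℝ 2 ↿φ) (hu : Differentiable ℝ ↿u) (hw : Differentiable ℝ ↿w)
    (hincomp : ∀ t x z, (∑ i, fderiv ℝ (fun y => u t y z) x (EuclideanSpace.single i 1) i)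
      + deriv (fun ζ => w t x ζ) z = 0)
    (htransport : ∀ t x l, deriv (fun s => φ s x l) t
      + fderiv ℝ (fun y => φ t y l) x (u t x (φ t x l)) = w t x (φ t x l))
    (t : ℝ) (x : EuclideanSpace ℝ ι) (l : ℝ) :
    deriv (fun s => deriv (fun m => φ s x m) l) t
      + ∑ i, fderiv ℝ (fun y => deriv (fun m => φ t y m) l * u t y (φ t y l) i) x
          (EuclideanSpace.single i 1) = 0 := by
  have hφd : Differentiable ℝ ↿φ := hφ.differentiable two_ne_zero
  set H : ℝ → EuclideanSpace ℝ ι → ℝ → ℝ := fun s y m => fderiv ℝ ↿φ (s, y, m) (0, 0, 1)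
  set ũ : ℝ → EuclideanSpace ℝ ι → ℝ → EuclideanSpace ℝ ι := fun s y m => u s y (φ s y m)
  have hH (s y) : deriv (fun m => φ s y m) l = H s y l := (hasDerivAt_slice_thd (hφd _)).deriv
  have hHd : Differentiable ℝ ↿H :=
    ((hφ.fderiv_right le_rfl).differentiable one_ne_zero).clm_apply (differentiable_const _)
  have hũd : Differentiable ℝ ↿ũ := fun p => (hu _).comp_verticalLift (hφd p)
  have hinc := hincomp t x (φ t x l)
  simp only [fderiv_slice_snd_apply (hu _), (hasDerivAt_slice_thd (hw _)).deriv] at hinc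
  simp only [hH]
  rw [sum_fderiv_mul_apply_single (hasFDerivAt_slice_snd (hHd _)).differentiableAt
    (hasFDerivAt_slice_snd (hũd _)).differentiableAt, ← add_assoc,
    deriv_slice_fst_add_fderiv_slice_snd (hHd _)]
  simp only [fderiv_slice_snd_apply (hũd _)]
  exact mass_conservation_of_transport hφ hu hw (fderiv_uncurry_apply_of_transport hφd htransport)
    (t, x, l) hinc

theorem momentum_equation {E : Type*} [NormedAddCommGroup E] [InnerProductSpace ℝ E]
    [CompleteSpace E] {g : ℝ} {zb : E → ℝ} {η : ℝ → E → ℝ} {φ w : ℝ → E → ℝ → ℝ}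
    {u : ℝ → E → ℝ → E} (hφ : ContDiff ℝ 2 ↿φ) (hu : Differentiable ℝ ↿u)
    (hmomentum : ∀ t x z, deriv (fun s => u s x z) t + fderiv ℝ (fun y => u t y z) x (u t x z)
      + w t x z • deriv (fun ζ => u t x ζ) z + g • gradient (fun y => η t y) x = 0)
    (htransport : ∀ t x l, deriv (fun s => φ s x l) t
      + fderiv ℝ (fun y => φ t y l) x (u t x (φ t x l)) = w t x (φ t x l))
    (hφ0 : ∀ t x, φ t x 0 = zb x) (hφ1 : ∀ t x, φ t x 1 = η t x) (t : ℝ) (x : E) (l : ℝ) :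
    deriv (fun s => u s x (φ s x l)) t + fderiv ℝ (fun y => u t y (φ t y l)) x (u t x (φ t x l))
      + g • gradient (fun y => ∫ m in (0 : ℝ)..1, deriv (fun m' => φ t y m') m) x
      = -(g • gradient zb x) := by
  have hφd : Differentiable ℝ ↿φ := hφ.differentiable two_ne_zero
  have hdepth : gradient (fun y => ∫ m in (0 : ℝ)..1, deriv (fun m' => φ t y m') m) x
      = gradient (fun y => η t y) x - gradient zb x := by
    simp only [integral_deriv_slice_thd (hφ.of_le one_le_two)]
    rw [gradient_fun_sub (hasFDerivAt_slice_snd (hφd _)).differentiableAt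
      (hasFDerivAt_slice_snd (hφd _)).differentiableAt]
    simp only [hφ0, hφ1]
  have hmaterial := hmomentum t x (φ t x l)
  rw [deriv_slice_fst_add_fderiv_slice_snd (hu _), (hasDerivAt_slice_thd (hu _)).deriv]
    at hmaterial
  have htr : fderiv ℝ ↿φ (t, x, l) (1, u t x (φ t x l), 0) = w t x (φ t x l) :=
    fderiv_uncurry_apply_of_transport hφd htransport (t, x, l)
  have hchain : fderiv ℝ ↿(fun s y m => u s y (φ s y m)) (t, x, l) (1, u t x (φ t x l), 0)
      = fderiv ℝ ↿u (t, x, φ t x l) (1, u t x (φ t x l), 0)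
        + w t x (φ t x l) • fderiv ℝ ↿u (t, x, φ t x l) (0, 0, 1) := by
    rw [← htr]
    exact fderiv_comp_verticalLift_apply (hu _) (hφd _) _
  rw [deriv_slice_fst_add_fderiv_slice_snd (f := fun s y m => u s y (φ s y m))
    ((hu _).comp_verticalLift (hφd _)), hchain, hdepth]
  linear_combination (norm := module) hmaterial

theorem stmt0_general (d : ℕ) (g : ℝ)
    (zb : EuclideanSpace ℝ (Fin d) → ℝ)
    (η : ℝ → EuclideanSpace ℝ (Fin d) → ℝ)
    (u : ℝ → EuclideanSpace ℝ (Fin d) → ℝ → EuclideanSpace ℝ (Fin d))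
    (w : ℝ → EuclideanSpace ℝ (Fin d) → ℝ → ℝ)
    (φ : ℝ → EuclideanSpace ℝ (Fin d) → ℝ → ℝ)
    (hu : ContDiff ℝ 2 (fun p : ℝ × EuclideanSpace ℝ (Fin d) × ℝ => u p.1 p.2.1 p.2.2))
    (hw : ContDiff ℝ 2 (fun p : ℝ × EuclideanSpace ℝ (Fin d) × ℝ => w p.1 p.2.1 p.2.2))
    (hφ : ContDiff ℝ 2 (fun p : ℝ × EuclideanSpace ℝ (Fin d) × ℝ => φ p.1 p.2.1 p.2.2))
    -- momentum equation: `∂ₜu + (u·∇ₓ)u + w ∂_z u + g ∇ₓη = 0`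
    (heuler1 : ∀ (t : ℝ) (x : EuclideanSpace ℝ (Fin d)) (z : ℝ),
      deriv (fun s => u s x z) t
        + fderiv ℝ (fun y => u t y z) x (u t x z)
        + w t x z • deriv (fun ζ => u t x ζ) z
        + g • gradient (fun y => η t y) x = 0)
    -- incompressibility: `∇ₓ·u + ∂_z w = 0`
    (heuler2 : ∀ (t : ℝ) (x : EuclideanSpace ℝ (Fin d)) (z : ℝ),
      (∑ i, fderiv ℝ (fun y => u t y z) x (EuclideanSpace.single i 1) i)
        + deriv (fun ζ => w t x ζ) z = 0)
    -- transport equation for `φ`: `∂ₜφ + u(t,x,φ)·∇ₓφ = w(t,x,φ)`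
    (hφeq : ∀ (t : ℝ) (x : EuclideanSpace ℝ (Fin d)) (l : ℝ),
      deriv (fun s => φ s x l) t
        + fderiv ℝ (fun y => φ t y l) x (u t x (φ t x l)) = w t x (φ t x l))
    (hφ0 : ∀ t x, φ t x 0 = zb x)
    (hφ1 : ∀ t x, φ t x 1 = η t x) :
    ∀ (t : ℝ) (x : EuclideanSpace ℝ (Fin d)), ∀ l ∈ Set.Ioo (0:ℝ) 1,
      -- mass equation: `∂ₜH + ∇ₓ·(Hũ) = 0` with `H = ∂_λ φ`, `ũ = u(t,x,φ)`
      (deriv (fun s => deriv (fun m => φ s x m) l) t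
        + ∑ i, fderiv ℝ
            (fun y => deriv (fun m => φ t y m) l * u t y (φ t y l) i) x
            (EuclideanSpace.single i 1) = 0)
      ∧
      -- momentum equation: `∂ₜũ + (ũ·∇ₓ)ũ + g ∇ₓ∫₀¹ H dλ' = -g ∇ₓ z_b`
      (deriv (fun s => u s x (φ s x l)) t
        + fderiv ℝ (fun y => u t y (φ t y l)) x (u t x (φ t x l))
        + g • gradient (fun y => ∫ m in (0:ℝ)..1, deriv (fun m' => φ t y m') m) x
        = -(g • gradient zb x)) := by
  intro t x l _
  have hud : Differentiable ℝ ↿u := hu.differentiable two_ne_zero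
  exact ⟨mass_equation hφ hud (hw.differentiable two_ne_zero) heuler2 hφeq t x l,
    momentum_equation hφ hud heuler1 hφeq hφ0 hφ1 t x l⟩

/-- Transformation of the hydrostatic free-surface Euler system into the
semi-Lagrangian formulation: if `(η, u, w)` solves the hydrostatic Euler equations and `φ`
is the semi-Lagrangian change of variable (transported by the flow, with `φ = z_b` at
`λ = 0` and `φ = η` at `λ = 1`), then `H = ∂_λ φ` and `ũ(t,x,λ) = u(t,x,φ(t,x,λ))`
satisfy `∂ₜH + ∇ₓ·(Hũ) = 0` and `∂ₜũ + (ũ·∇ₓ)ũ + g∇ₓ∫₀¹H dλ' = -g∇ₓ z_b`. -/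
theorem stmt0 (d : ℕ) (hd : 1 ≤ d) (g : ℝ) (hg : 0 < g)
    (zb : EuclideanSpace ℝ (Fin d) → ℝ)
    (η : ℝ → EuclideanSpace ℝ (Fin d) → ℝ)
    (u : ℝ → EuclideanSpace ℝ (Fin d) → ℝ → EuclideanSpace ℝ (Fin d))
    (w : ℝ → EuclideanSpace ℝ (Fin d) → ℝ → ℝ)
    (φ : ℝ → EuclideanSpace ℝ (Fin d) → ℝ → ℝ)
    (hzb : ContDiff ℝ 2 zb)
    (hη : ContDiff ℝ 2 (fun p : ℝ × EuclideanSpace ℝ (Fin d) => η p.1 p.2))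
    (hu : ContDiff ℝ 2 (fun p : ℝ × EuclideanSpace ℝ (Fin d) × ℝ => u p.1 p.2.1 p.2.2))
    (hw : ContDiff ℝ 2 (fun p : ℝ × EuclideanSpace ℝ (Fin d) × ℝ => w p.1 p.2.1 p.2.2))
    (hφ : ContDiff ℝ 2 (fun p : ℝ × EuclideanSpace ℝ (Fin d) × ℝ => φ p.1 p.2.1 p.2.2))
    -- momentum equation: `∂ₜu + (u·∇ₓ)u + w ∂_z u + g ∇ₓη = 0`
    (heuler1 : ∀ (t : ℝ) (x : EuclideanSpace ℝ (Fin d)) (z : ℝ),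
      deriv (fun s => u s x z) t
        + fderiv ℝ (fun y => u t y z) x (u t x z)
        + w t x z • deriv (fun ζ => u t x ζ) z
        + g • gradient (fun y => η t y) x = 0)
    -- incompressibility: `∇ₓ·u + ∂_z w = 0`
    (heuler2 : ∀ (t : ℝ) (x : EuclideanSpace ℝ (Fin d)) (z : ℝ),
      (∑ i, fderiv ℝ (fun y => u t y z) x (EuclideanSpace.single i 1) i)
        + deriv (fun ζ => w t x ζ) z = 0)
    -- transport equation for `φ`: `∂ₜφ + u(t,x,φ)·∇ₓφ = w(t,x,φ)`
    (hφeq : ∀ (t : ℝ) (x : EuclideanSpace ℝ (Fin d)) (l : ℝ),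
      deriv (fun s => φ s x l) t
        + fderiv ℝ (fun y => φ t y l) x (u t x (φ t x l)) = w t x (φ t x l))
    (hφ0 : ∀ t x, φ t x 0 = zb x)
    (hφ1 : ∀ t x, φ t x 1 = η t x) :
    ∀ (t : ℝ) (x : EuclideanSpace ℝ (Fin d)), ∀ l ∈ Set.Ioo (0:ℝ) 1,
      -- mass equation: `∂ₜH + ∇ₓ·(Hũ) = 0` with `H = ∂_λ φ`, `ũ = u(t,x,φ)`
      (deriv (fun s => deriv (fun m => φ s x m) l) t
        + ∑ i, fderiv ℝ
            (fun y => deriv (fun m => φ t y m) l * u t y (φ t y l) i) x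
            (EuclideanSpace.single i 1) = 0)
      ∧
      -- momentum equation: `∂ₜũ + (ũ·∇ₓ)ũ + g ∇ₓ∫₀¹ H dλ' = -g ∇ₓ z_b`
      (deriv (fun s => u s x (φ s x l)) t
        + fderiv ℝ (fun y => u t y (φ t y l)) x (u t x (φ t x l))
        + g • gradient (fun y => ∫ m in (0:ℝ)..1, deriv (fun m' => φ t y m') m) x
        = -(g • gradient zb x)) :=
  stmt0_general d g zb η u w φ hu hw hφ heuler1 heuler2 hφeq hφ0 hφ1
end

section
/- Let g > 0 and z_b : ℝ → ℝ be C¹. Let H, ũ : ℝ × ℝ × (0,1) → ℝ be C² functions with H > 0 everywhere, satisfying for all (t,x,λ) ∈ ℝ × ℝ × (0,1): ∂_t H + ∂_x(H ũ) = 0 and ∂_t ũ + ũ ∂_x ũ + g ∂_x ∫₀¹ H(t,x,λ') dλ' = −g z_b'(x). Then the hydrostatic vorticity ω̃ := (∂_λ ũ)/H satisfies the transport equation ∂_t ω̃ + ũ ∂_x ω̃ = 0 for all (t,x,λ) ∈ ℝ × ℝ × (0,1). -/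
/-!
Write `D = ∂ₜ + ũ ∂ₓ`. The right-hand side of the momentum equation does not depend on `λ`, so
differentiating the equation in `λ` and commuting mixed partials (`ũ` is `C²`) gives
`D (∂_λ ũ) = -(∂ₓ ũ) ∂_λ ũ`, while the mass equation in transport form reads `D H = -(∂ₓ ũ) H`.
Numerator and denominator of `ω̃ = ∂_λ ũ / H` thus obey the same linear equation along
characteristics, so their quotient is transported: `D ω̃ = 0`.
-/

open Set Topology

noncomputable def materialDeriv (v : ℝ) (a : ℝ → ℝ → ℝ) (t x : ℝ) : ℝ :=
  deriv (fun s => a s x) t + v * deriv (fun y => a t y) x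

section MaterialDeriv

variable {a b w : ℝ → ℝ → ℝ} {v k t x : ℝ}

theorem materialDeriv_div (ha_t : DifferentiableAt ℝ (fun s => a s x) t)
    (ha_x : DifferentiableAt ℝ (fun y => a t y) x) (hb_t : DifferentiableAt ℝ (fun s => b s x) t)
    (hb_x : DifferentiableAt ℝ (fun y => b t y) x) (hb : b t x ≠ 0) :
    materialDeriv v (fun s y => a s y / b s y) t x
      = (materialDeriv v a t x * b t x - a t x * materialDeriv v b t x) / b t x ^ 2 := by
  simp only [materialDeriv]
  rw [deriv_fun_div ha_t hb_t hb, deriv_fun_div ha_x hb_x hb]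
  ring

theorem materialDeriv_div_eq_zero (ha_t : DifferentiableAt ℝ (fun s => a s x) t)
    (ha_x : DifferentiableAt ℝ (fun y => a t y) x) (hb_t : DifferentiableAt ℝ (fun s => b s x) t)
    (hb_x : DifferentiableAt ℝ (fun y => b t y) x) (hb : b t x ≠ 0)
    (ha : materialDeriv v a t x = -(k * a t x)) (hb' : materialDeriv v b t x = -(k * b t x)) :
    materialDeriv v (fun s y => a s y / b s y) t x = 0 := by
  rw [materialDeriv_div ha_t ha_x hb_t hb_x hb, ha, hb']
  ring

theorem materialDeriv_eq_of_deriv_add_deriv_mul_eq_zero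
    (ha_x : DifferentiableAt ℝ (fun y => a t y) x) (hw_x : DifferentiableAt ℝ (fun y => w t y) x)
    (h : deriv (fun s => a s x) t + deriv (fun y => a t y * w t y) x = 0) :
    materialDeriv (w t x) a t x = -(deriv (fun y => w t y) x * a t x) := by
  rw [deriv_fun_mul ha_x hw_x] at h
  simp only [materialDeriv]
  linear_combination h

end MaterialDeriv

section Slices

variable {E : Type*} [NormedAddCommGroup E] [NormedSpace ℝ E] {f : ℝ × ℝ × ℝ → E}
  {f' : ℝ × ℝ × ℝ →L[ℝ] E} {t x l : ℝ}

theorem HasFDerivAt.hasDerivAt_slice₁ (hf : HasFDerivAt f f' (t, x, l)) :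
    HasDerivAt (fun s => f (s, x, l)) (f' (1, 0, 0)) t :=
  hf.comp_hasDerivAt t <|
    (hasDerivAt_id t).prodMk ((hasDerivAt_const t x).prodMk (hasDerivAt_const t l))

theorem HasFDerivAt.hasDerivAt_slice₂ (hf : HasFDerivAt f f' (t, x, l)) :
    HasDerivAt (fun y => f (t, y, l)) (f' (0, 1, 0)) x :=
  hf.comp_hasDerivAt x <|
    (hasDerivAt_const x t).prodMk ((hasDerivAt_id x).prodMk (hasDerivAt_const x l))

theorem HasFDerivAt.hasDerivAt_slice₃ (hf : HasFDerivAt f f' (t, x, l)) :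
    HasDerivAt (fun m => f (t, x, m)) (f' (0, 0, 1)) l :=
  hf.comp_hasDerivAt l <|
    (hasDerivAt_const l t).prodMk ((hasDerivAt_const l x).prodMk (hasDerivAt_id l))

end Slices

theorem HasDerivAt.clm_apply_const {F G : Type*} [NormedAddCommGroup F] [NormedSpace ℝ F]
    [NormedAddCommGroup G] [NormedSpace ℝ G] {c : ℝ → F →L[ℝ] G} {c' : F →L[ℝ] G} {s : ℝ}
    (hc : HasDerivAt c c' s) (w : F) : HasDerivAt (fun r => c r w) (c' w) s := by
  simpa using hc.clm_apply (hasDerivAt_const s w)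

def uncurry₃ {α β γ δ : Type*} (f : α → β → γ → δ) : α × β × γ → δ :=
  fun p => f p.1 p.2.1 p.2.2

def slab : Set (ℝ × ℝ × ℝ) := univ ×ˢ univ ×ˢ Ioo 0 1

theorem ContDiffOn.contDiffAt_slab {E : Type*} [NormedAddCommGroup E] [NormedSpace ℝ E]
    {f : ℝ × ℝ × ℝ → E} {n : WithTop ℕ∞} (hf : ContDiffOn ℝ n f slab) {s y m : ℝ}
    (hm : m ∈ Ioo (0 : ℝ) 1) : ContDiffAt ℝ n f (s, y, m) :=
  hf.contDiffAt <| (isOpen_univ.prod (isOpen_univ.prod isOpen_Ioo)).mem_nhds ⟨trivial, trivial, hm⟩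

section Slab

variable {u : ℝ → ℝ → ℝ → ℝ} {t x l : ℝ}

theorem hasFDerivAt_uncurry₃ (hu : ContDiffOn ℝ 1 (uncurry₃ u) slab) (s y : ℝ) {m : ℝ}
    (hm : m ∈ Ioo (0 : ℝ) 1) :
    HasFDerivAt (uncurry₃ u) (fderiv ℝ (uncurry₃ u) (s, y, m)) (s, y, m) :=
  ((hu.contDiffAt_slab hm).differentiableAt one_ne_zero).hasFDerivAt

theorem deriv_slices_eq_fderiv (hu : DifferentiableAt ℝ (uncurry₃ u) (t, x, l)) :
    deriv (fun s => u s x l) t = fderiv ℝ (uncurry₃ u) (t, x, l) (1, 0, 0) ∧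
      deriv (fun y => u t y l) x = fderiv ℝ (uncurry₃ u) (t, x, l) (0, 1, 0) ∧
      deriv (fun m => u t x m) l = fderiv ℝ (uncurry₃ u) (t, x, l) (0, 0, 1) :=
  ⟨hu.hasFDerivAt.hasDerivAt_slice₁.deriv, hu.hasFDerivAt.hasDerivAt_slice₂.deriv,
    hu.hasFDerivAt.hasDerivAt_slice₃.deriv⟩

theorem hasFDerivAt_fderiv_uncurry₃ (hu : ContDiffOn ℝ 2 (uncurry₃ u) slab)
    (hl : l ∈ Ioo (0 : ℝ) 1) :
    HasFDerivAt (fderiv ℝ (uncurry₃ u)) (fderiv ℝ (fderiv ℝ (uncurry₃ u)) (t, x, l)) (t, x, l) :=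
  (((hu.contDiffAt_slab hl).fderiv_right le_rfl).differentiableAt one_ne_zero).hasFDerivAt

theorem deriv_slice₃_eq_fderiv (hu : ContDiffOn ℝ 1 (uncurry₃ u) slab) (hl : l ∈ Ioo (0 : ℝ) 1)
    (s y : ℝ) : deriv (fun m => u s y m) l = fderiv ℝ (uncurry₃ u) (s, y, l) (0, 0, 1) :=
  (deriv_slices_eq_fderiv (hasFDerivAt_uncurry₃ hu s y hl).differentiableAt).2.2

theorem hasDerivAt_mixed₁₃ (hu : ContDiffOn ℝ 2 (uncurry₃ u) slab) (hl : l ∈ Ioo (0 : ℝ) 1) :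
    HasDerivAt (fun s => deriv (fun m => u s x m) l)
      (fderiv ℝ (fderiv ℝ (uncurry₃ u)) (t, x, l) (1, 0, 0) (0, 0, 1)) t := by
  simp only [deriv_slice₃_eq_fderiv (hu.of_le one_le_two) hl]
  exact (hasFDerivAt_fderiv_uncurry₃ hu hl).hasDerivAt_slice₁.clm_apply_const _

theorem hasDerivAt_mixed₂₃ (hu : ContDiffOn ℝ 2 (uncurry₃ u) slab) (hl : l ∈ Ioo (0 : ℝ) 1) :
    HasDerivAt (fun y => deriv (fun m => u t y m) l)
      (fderiv ℝ (fderiv ℝ (uncurry₃ u)) (t, x, l) (0, 1, 0) (0, 0, 1)) x := by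
  simp only [deriv_slice₃_eq_fderiv (hu.of_le one_le_two) hl]
  exact (hasFDerivAt_fderiv_uncurry₃ hu hl).hasDerivAt_slice₂.clm_apply_const _

theorem materialDeriv_deriv_of_materialDeriv_eq_const (hu : ContDiffOn ℝ 2 (uncurry₃ u) slab)
    (hl : l ∈ Ioo (0 : ℝ) 1) {c : ℝ}
    (hc : ∀ m ∈ Ioo (0 : ℝ) 1, materialDeriv (u t x m) (fun s y => u s y m) t x = c) :
    materialDeriv (u t x l) (fun s y => deriv (fun m => u s y m) l) t x
      = -(deriv (fun y => u t y l) x * deriv (fun m => u t x m) l) := by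
  set U := uncurry₃ u
  set A := fderiv ℝ (fderiv ℝ U) (t, x, l)
  have hdU := hasFDerivAt_uncurry₃ (hu.of_le one_le_two)
  have hA : HasFDerivAt (fderiv ℝ U) A (t, x, l) := hasFDerivAt_fderiv_uncurry₃ hu hl
  have hmom : HasDerivAt (fun m => fderiv ℝ U (t, x, m) (1, 0, 0)
        + U (t, x, m) * fderiv ℝ U (t, x, m) (0, 1, 0))
      (A (0, 0, 1) (1, 0, 0) + (fderiv ℝ U (t, x, l) (0, 0, 1) * fderiv ℝ U (t, x, l) (0, 1, 0)
        + U (t, x, l) * A (0, 0, 1) (0, 1, 0))) l :=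
    (hA.hasDerivAt_slice₃.clm_apply_const _).add
      ((hdU t x hl).hasDerivAt_slice₃.mul (hA.hasDerivAt_slice₃.clm_apply_const _))
  have hmom_const : (fun m => fderiv ℝ U (t, x, m) (1, 0, 0)
        + U (t, x, m) * fderiv ℝ U (t, x, m) (0, 1, 0)) =ᶠ[𝓝 l] fun _ => c := by
    filter_upwards [Ioo_mem_nhds hl.1 hl.2] with m hm
    obtain ⟨h₁, h₂, -⟩ := deriv_slices_eq_fderiv (hdU t x hm).differentiableAt
    rw [← hc m hm, materialDeriv, h₁, h₂]
    rfl
  have key := hmom.unique ((hasDerivAt_const l c).congr_of_eventuallyEq hmom_const)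
  rw [show U (t, x, l) = u t x l from rfl] at key
  have hsymm : IsSymmSndFDerivAt ℝ U (t, x, l) :=
    (hu.contDiffAt_slab hl).isSymmSndFDerivAt (by simp)
  obtain ⟨-, h₂, h₃⟩ := deriv_slices_eq_fderiv (hdU t x hl).differentiableAt
  rw [materialDeriv, (hasDerivAt_mixed₁₃ hu hl).deriv, (hasDerivAt_mixed₂₃ hu hl).deriv, h₂, h₃,
    hsymm.eq (1, 0, 0), hsymm.eq (0, 1, 0)]
  linear_combination key

end Slab

theorem stmt1_general (g : ℝ) (zb : ℝ → ℝ)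
    (H u : ℝ → ℝ → ℝ → ℝ)
    (hH : ContDiffOn ℝ 2 (fun p : ℝ × ℝ × ℝ => H p.1 p.2.1 p.2.2)
      (Set.univ ×ˢ (Set.univ ×ˢ Set.Ioo 0 1)))
    (hu : ContDiffOn ℝ 2 (fun p : ℝ × ℝ × ℝ => u p.1 p.2.1 p.2.2)
      (Set.univ ×ˢ (Set.univ ×ˢ Set.Ioo 0 1)))
    (hHpos : ∀ t x : ℝ, ∀ l ∈ Set.Ioo (0:ℝ) 1, 0 < H t x l)
    (heq1 : ∀ t x : ℝ, ∀ l ∈ Set.Ioo (0:ℝ) 1,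
      deriv (fun s => H s x l) t + deriv (fun y => H t y l * u t y l) x = 0)
    (heq2 : ∀ t x : ℝ, ∀ l ∈ Set.Ioo (0:ℝ) 1,
      deriv (fun s => u s x l) t + u t x l * deriv (fun y => u t y l) x
        + g * deriv (fun y => ∫ m in (0:ℝ)..1, H t y m) x = -(g * deriv zb x)) :
    ∀ t x : ℝ, ∀ l ∈ Set.Ioo (0:ℝ) 1,
      deriv (fun s => deriv (fun m => u s x m) l / H s x l) t
        + u t x l * deriv (fun y => deriv (fun m => u t y m) l / H t y l) x = 0 := by
  intro t x l hl
  have hdH := hasFDerivAt_uncurry₃ (hH.of_le one_le_two) t x hl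
  have hdu := hasFDerivAt_uncurry₃ (hu.of_le one_le_two) t x hl
  have hvorticity : materialDeriv (u t x l) (fun s y => deriv (fun m => u s y m) l) t x
      = -(deriv (fun y => u t y l) x * deriv (fun m => u t x m) l) :=
    materialDeriv_deriv_of_materialDeriv_eq_const hu hl fun m hm =>
      eq_sub_of_add_eq (heq2 t x m hm)
  have hmass : materialDeriv (u t x l) (fun s y => H s y l) t x
      = -(deriv (fun y => u t y l) x * H t x l) :=
    materialDeriv_eq_of_deriv_add_deriv_mul_eq_zero (w := fun s y => u s y l)
      hdH.hasDerivAt_slice₂.differentiableAt hdu.hasDerivAt_slice₂.differentiableAt (heq1 t x l hl)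
  show materialDeriv (u t x l) (fun s y => deriv (fun m => u s y m) l / H s y l) t x = 0
  exact materialDeriv_div_eq_zero (hasDerivAt_mixed₁₃ hu hl).differentiableAt
    (hasDerivAt_mixed₂₃ hu hl).differentiableAt hdH.hasDerivAt_slice₁.differentiableAt
    hdH.hasDerivAt_slice₂.differentiableAt (hHpos t x l hl).ne' hvorticity hmass

/-- For the one-dimensional semi-Lagrangian hydrostatic system with
gravity `g > 0` and topography `z_b`, if `H, ũ` are `C²` with `H > 0` and satisfy
`∂ₜH + ∂ₓ(Hũ) = 0` and `∂ₜũ + ũ∂ₓũ + g∂ₓ∫₀¹H dλ' = -g z_b'`, then the hydrostatic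
vorticity `ω̃ = (∂_λ ũ)/H` satisfies the transport equation `∂ₜω̃ + ũ ∂ₓω̃ = 0`
on `ℝ × ℝ × (0,1)`. -/
theorem stmt1 (g : ℝ) (hg : 0 < g) (zb : ℝ → ℝ) (hzb : ContDiff ℝ 1 zb)
    (H u : ℝ → ℝ → ℝ → ℝ)
    (hH : ContDiffOn ℝ 2 (fun p : ℝ × ℝ × ℝ => H p.1 p.2.1 p.2.2)
      (Set.univ ×ˢ (Set.univ ×ˢ Set.Ioo 0 1)))
    (hu : ContDiffOn ℝ 2 (fun p : ℝ × ℝ × ℝ => u p.1 p.2.1 p.2.2)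
      (Set.univ ×ˢ (Set.univ ×ˢ Set.Ioo 0 1)))
    (hHpos : ∀ t x : ℝ, ∀ l ∈ Set.Ioo (0:ℝ) 1, 0 < H t x l)
    (heq1 : ∀ t x : ℝ, ∀ l ∈ Set.Ioo (0:ℝ) 1,
      deriv (fun s => H s x l) t + deriv (fun y => H t y l * u t y l) x = 0)
    (heq2 : ∀ t x : ℝ, ∀ l ∈ Set.Ioo (0:ℝ) 1,
      deriv (fun s => u s x l) t + u t x l * deriv (fun y => u t y l) x
        + g * deriv (fun y => ∫ m in (0:ℝ)..1, H t y m) x = -(g * deriv zb x)) :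
    ∀ t x : ℝ, ∀ l ∈ Set.Ioo (0:ℝ) 1,
      deriv (fun s => deriv (fun m => u s x m) l / H s x l) t
        + u t x l * deriv (fun y => deriv (fun m => u t y m) l / H t y l) x = 0 :=
  stmt1_general g zb H u hH hu hHpos heq1 heq2
end

section
/- Let g > 0. Let F : [0,1] → ℝ be C¹ and G : ℝ → ℝ be C¹ such that F(λ) − G(x) > 0 and F'(λ) > 0 for all (x,λ) ∈ ℝ × [0,1]. Define H(x,λ) = F'(λ)/√(F(λ) − G(x)) and ũ(x,λ) = √(F(λ) − G(x)), and set z_b(x) = G(x)/(2g) − 2√(F(1) − G(x)) + 2√(F(0) − G(x)). Then: (a) ∫₀¹ H(x,λ) dλ = 2√(F(1) − G(x)) − 2√(F(0) − G(x)) for all x; (b) for all (x,λ) ∈ ℝ × (0,1), ∂_x(H ũ) = 0 and ũ ∂_x ũ + g ∂_x ∫₀¹ H(x,λ') dλ' = −g z_b'(x); that is, (H,ũ) is a stationary solution of the one-dimensional semi-Lagrangian hydrostatic system with topography z_b. -/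
/-!
In `λ`, `2√(F(λ) - G(x))` is an antiderivative of `H`, which gives (a). The flux `H ũ = F'(λ)`
does not depend on `x`. Since `ũ² = F(λ) - G(x)`, one has `ũ ∂ₓũ = -G'/2`, while by (a)
`z_b = G/(2g) - ∫₀¹ H dλ`, so `g ∂ₓ∫₀¹ H dλ = G'/2 - g z_b'`, and the two add up to `-g z_b'`.
-/

open Real Set

theorem hasDerivAt_sqrt_const_sub {G : ℝ → ℝ} {G' c x : ℝ} (hG : HasDerivAt G G' x)
    (hpos : 0 < c - G x) :
    HasDerivAt (fun y => √(c - G y)) (-G' / (2 * √(c - G x))) x :=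
  (hG.const_sub c).sqrt hpos.ne'

theorem sqrt_const_sub_mul_deriv {G : ℝ → ℝ} {G' c x : ℝ} (hG : HasDerivAt G G' x)
    (hpos : 0 < c - G x) :
    √(c - G x) * deriv (fun y => √(c - G y)) x = -G' / 2 := by
  have hne : √(c - G x) ≠ 0 := (sqrt_pos.mpr hpos).ne'
  rw [(hasDerivAt_sqrt_const_sub hG hpos).deriv]
  field_simp

theorem integral_deriv_div_sqrt_sub_const {F : ℝ → ℝ} {a b c : ℝ} (hF : ContDiff ℝ 1 F)
    (hpos : ∀ l ∈ uIcc a b, 0 < F l - c) :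
    ∫ l in a..b, deriv F l / √(F l - c) = 2 * √(F b - c) - 2 * √(F a - c) := by
  have hne : ∀ l ∈ uIcc a b, √(F l - c) ≠ 0 := fun l hl => (sqrt_pos.mpr (hpos l hl)).ne'
  have hderiv : ∀ l ∈ uIcc a b,
      HasDerivAt (fun l => 2 * √(F l - c)) (deriv F l / √(F l - c)) l := by
    intro l hl
    have hFl := ((hF.differentiable one_ne_zero l).hasDerivAt.sub_const c).sqrt (hpos l hl).ne'
    exact (hFl.const_mul 2).congr_deriv (by ring)
  have hcont : ContinuousOn (fun l => deriv F l / √(F l - c)) (uIcc a b) :=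
    hF.continuous_deriv_one.continuousOn.div
      (hF.continuous.sub continuous_const).sqrt.continuousOn hne
  exact intervalIntegral.integral_eq_sub_of_hasDerivAt hderiv hcont.intervalIntegrable

theorem deriv_div_mul_self_eq_zero {s : ℝ → ℝ} (a x : ℝ) (hs : ∀ y, s y ≠ 0) :
    deriv (fun y => a / s y * s y) x = 0 := by
  simp only [div_mul_cancel₀ _ (hs _), deriv_const]

theorem stmt3_general (g : ℝ) (hg : 0 < g) (F G : ℝ → ℝ)
    (hF : ContDiff ℝ 1 F) (hG : ContDiff ℝ 1 G)
    (hpos : ∀ x : ℝ, ∀ l ∈ Set.Icc (0:ℝ) 1, 0 < F l - G x) :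
    -- (a)
    (∀ x : ℝ, ∫ l in (0:ℝ)..1, deriv F l / Real.sqrt (F l - G x) =
      2 * Real.sqrt (F 1 - G x) - 2 * Real.sqrt (F 0 - G x)) ∧
    -- (b)
    (∀ x : ℝ, ∀ l ∈ Set.Ioo (0:ℝ) 1,
      deriv (fun y => (deriv F l / Real.sqrt (F l - G y)) * Real.sqrt (F l - G y)) x = 0 ∧
      Real.sqrt (F l - G x) * deriv (fun y => Real.sqrt (F l - G y)) x +
        g * deriv (fun y => ∫ m in (0:ℝ)..1, deriv F m / Real.sqrt (F m - G y)) x =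
        -(g * deriv (fun y => G y / (2 * g) - 2 * Real.sqrt (F 1 - G y) +
            2 * Real.sqrt (F 0 - G y)) x)) := by
  have hdepth (x : ℝ) := integral_deriv_div_sqrt_sub_const (a := 0) (b := 1) (c := G x) hF
    (by simpa only [uIcc_of_le zero_le_one] using hpos x)
  refine ⟨hdepth, fun x l hl => ⟨?_, ?_⟩⟩
  · exact deriv_div_mul_self_eq_zero _ x fun y =>
      (sqrt_pos.mpr (hpos y l (Ioo_subset_Icc_self hl))).ne'
  · have hGx := (hG.differentiable one_ne_zero x).hasDerivAt
    have hD : HasDerivAt (fun y => 2 * √(F 1 - G y) - 2 * √(F 0 - G y)) _ x :=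
      ((hasDerivAt_sqrt_const_sub hGx (hpos x 1 (right_mem_Icc.mpr zero_le_one))).const_mul 2).sub
        ((hasDerivAt_sqrt_const_sub hGx (hpos x 0 (left_mem_Icc.mpr zero_le_one))).const_mul 2)
    have hzb : HasDerivAt (fun y => G y / (2 * g) - 2 * √(F 1 - G y) + 2 * √(F 0 - G y)) _ x :=
      ((hGx.div_const (2 * g)).sub hD).congr_of_eventuallyEq
        (Filter.Eventually.of_forall fun y => by simp only [Pi.sub_apply]; ring)
    rw [sqrt_const_sub_mul_deriv hGx (hpos x l (Ioo_subset_Icc_self hl)), funext hdepth,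
      hD.deriv, hzb.deriv]
    field_simp [hg.ne']
    ring

/-- Explicit stationary solutions: for `C¹` functions `F, G` with
`F(λ) - G(x) > 0` and `F'(λ) > 0`, setting `H = F'(λ)/√(F(λ)-G(x))`,
`ũ = √(F(λ)-G(x))` and `z_b(x) = G(x)/(2g) - 2√(F(1)-G(x)) + 2√(F(0)-G(x))`, one has
(a) `∫₀¹ H dλ = 2√(F(1)-G(x)) - 2√(F(0)-G(x))`, and (b) `(H, ũ)` is a stationary
solution of the one-dimensional semi-Lagrangian hydrostatic system with topography `z_b`. -/
theorem stmt3 (g : ℝ) (hg : 0 < g) (F G : ℝ → ℝ)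
    (hF : ContDiff ℝ 1 F) (hG : ContDiff ℝ 1 G)
    (hpos : ∀ x : ℝ, ∀ l ∈ Set.Icc (0:ℝ) 1, 0 < F l - G x)
    (hF' : ∀ l ∈ Set.Icc (0:ℝ) 1, 0 < deriv F l) :
    -- (a)
    (∀ x : ℝ, ∫ l in (0:ℝ)..1, deriv F l / Real.sqrt (F l - G x) =
      2 * Real.sqrt (F 1 - G x) - 2 * Real.sqrt (F 0 - G x)) ∧
    -- (b)
    (∀ x : ℝ, ∀ l ∈ Set.Ioo (0:ℝ) 1,
      deriv (fun y => (deriv F l / Real.sqrt (F l - G y)) * Real.sqrt (F l - G y)) x = 0 ∧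
      Real.sqrt (F l - G x) * deriv (fun y => Real.sqrt (F l - G y)) x +
        g * deriv (fun y => ∫ m in (0:ℝ)..1, deriv F m / Real.sqrt (F m - G y)) x =
        -(g * deriv (fun y => G y / (2 * g) - 2 * Real.sqrt (F 1 - G y) +
            2 * Real.sqrt (F 0 - G y)) x)) :=
  stmt3_general g hg F G hF hG hpos
end

section
/- Let I = (0,1) with Lebesgue measure μ, g > 0, and ũ, H ∈ L^∞(I;ℝ) with essinf_I H > 0. Then the spectrum of the bounded operator A₀ on L²(I;ℂ)² equals σ(A₀) = ũ[I] ∪ { c ∈ ℂ \ ũ[I] : ∫₀¹ g H(λ)/(c − ũ(λ))² dλ = 1 }, where ũ[I] is the essential range of ũ (note that for c ∉ ũ[I] the function (c − ũ)⁻¹ lies in L^∞(I), so the integral is well defined). -/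
/-! Off the essential range of `u` the function `(c - u)⁻¹` is bounded, so `(c - A₀)Φ = Ψ` can be
solved pointwise once the mean `J = ∫ φ₁` is known; integrating the first component then leaves
the scalar equation `J (1 - F(c)) = ∫ ((c - u)⁻¹ψ₁ + H (c - u)⁻²ψ₂)`. Hence `c - A₀` is
invertible when `F(c) ≠ 1`, while for `F(c) = 1` the pair `(gH/(c - u)², g/(c - u))` is an
eigenvector, its first component having mean `F(c) = 1`. On the essential range, a mean-zero `ψ`
supported where `|u - c| < ε` is not seen by the rank-one part of `A₀`, so `(ψ, 0)` is an
`ε`-approximate eigenvector and `c - A₀` cannot have a bounded inverse. -/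

open MeasureTheory

/-- Lebesgue measure restricted to the interval `I = (0,1)`. -/
noncomputable def μ01 : Measure ℝ := volume.restrict (Set.Ioo 0 1)

instance : IsFiniteMeasure μ01 := ⟨by simp [μ01, Real.volume_Ioo]⟩

instance : NullSingletonClass μ01 := by unfold μ01; infer_instance

section Spectrum

variable {𝕜 E : Type*} [NontriviallyNormedField 𝕜] [NormedAddCommGroup E] [NormedSpace 𝕜 E]

theorem ContinuousLinearMap.mem_spectrum_of_forall_exists_norm_le (A : E →L[𝕜] E) {c : 𝕜}
    (h : ∀ ε > 0, ∃ x ≠ 0, ‖(algebraMap 𝕜 (E →L[𝕜] E) c - A) x‖ ≤ ε * ‖x‖) :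
    c ∈ spectrum 𝕜 A := by
  rintro ⟨U, hU⟩
  set B : E →L[𝕜] E := ↑U⁻¹
  obtain ⟨x, hx, hle⟩ := h (‖B‖ + 1)⁻¹ (by positivity)
  have hBx : B ((algebraMap 𝕜 (E →L[𝕜] E) c - A) x) = x := by
    rw [← hU]
    exact congr($(U.inv_mul) x)
  have hlt : ‖B‖ * (‖B‖ + 1)⁻¹ < 1 := by
    rw [mul_inv_lt_iff₀ (by positivity)]
    linarith
  refine lt_irrefl ‖x‖ ?_
  calc ‖x‖ = ‖B ((algebraMap 𝕜 (E →L[𝕜] E) c - A) x)‖ := by rw [hBx]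
    _ ≤ ‖B‖ * ((‖B‖ + 1)⁻¹ * ‖x‖) := B.le_of_opNorm_le_of_le le_rfl hle
    _ < ‖x‖ := by rw [← mul_assoc]; exact mul_lt_of_lt_one_left (norm_pos_iff.2 hx) hlt

theorem ContinuousLinearMap.mem_spectrum_of_sub_apply_eq_zero (A : E →L[𝕜] E) {c : 𝕜} {x : E}
    (hx : x ≠ 0) (h : (algebraMap 𝕜 (E →L[𝕜] E) c - A) x = 0) : c ∈ spectrum 𝕜 A :=
  A.mem_spectrum_of_forall_exists_norm_le fun ε hε =>
    ⟨x, hx, by rw [h, norm_zero]; positivity⟩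

end Spectrum

section EssRange

variable {α E : Type*} [MeasurableSpace α] [PseudoMetricSpace E]

def essRange (μ : Measure α) (f : α → E) : Set E :=
  {c | ∀ ε : ℝ, 0 < ε → 0 < μ {x | dist (f x) c < ε}}

theorem notMem_essRange_iff {μ : Measure α} {f : α → E} {c : E} :
    c ∉ essRange μ f ↔ ∃ ε > 0, ∀ᵐ x ∂μ, ε ≤ dist (f x) c := by
  simp [essRange, ae_iff]

theorem memLp_top_inv_sub_of_notMem_essRange {μ : Measure α} {f : α → ℂ} {c : ℂ}
    (hf : AEMeasurable f μ) (hc : c ∉ essRange μ f) : MemLp (fun x => (c - f x)⁻¹) ⊤ μ := by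
  obtain ⟨ε, hε, hae⟩ := notMem_essRange_iff.1 hc
  refine memLp_top_of_bound (aemeasurable_const.sub hf).inv.aestronglyMeasurable ε⁻¹ ?_
  filter_upwards [hae] with x hx
  rw [norm_inv, ← dist_eq_norm']
  exact inv_anti₀ hε hx

theorem ae_sub_ne_zero_of_notMem_essRange {μ : Measure α} {f : α → ℂ} {c : ℂ}
    (hc : c ∉ essRange μ f) : ∀ᵐ x ∂μ, c - f x ≠ 0 := by
  obtain ⟨ε, hε, hae⟩ := notMem_essRange_iff.1 hc
  filter_upwards [hae] with x hx
  rw [sub_ne_zero, ← dist_pos]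
  exact hε.trans_le (dist_comm (f x) c ▸ hx)

theorem memLp_top_div_sq_sub_of_notMem_essRange {μ : Measure α} {f h : α → ℂ} {c : ℂ}
    (hf : AEMeasurable f μ) (hh : MemLp h ⊤ μ) (hc : c ∉ essRange μ f) :
    MemLp (fun x => h x / (c - f x) ^ 2) ⊤ μ := by
  have hv := memLp_top_inv_sub_of_notMem_essRange hf hc
  convert hh.mul' (hv.mul' hv (r := ⊤)) (r := ⊤) using 2 with x
  rw [div_eq_mul_inv, ← inv_pow]
  ring

end EssRange

theorem exists_memLp_integral_eq_zero_of_measure_ne_zero {μ : Measure ℝ} [IsFiniteMeasure μ]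
    [NullSingletonClass μ] {S : Set ℝ} (hS : MeasurableSet S) (hμS : μ S ≠ 0) :
    ∃ ψ : ℝ → ℂ, MemLp ψ 2 μ ∧ ∫ x, ψ x ∂μ = 0 ∧ ¬ ψ =ᵐ[μ] 0 ∧ ∀ x ∉ S, ψ x = 0 := by
  -- any bounded injective `f` would do: `ψ` vanishes on `S` only where `f` equals its mean
  set f : ℝ → ℂ := fun x => (Real.arctan x : ℂ)
  set m := ⨍ x in S, f x ∂μ
  have hf : MemLp f ⊤ μ := by
    refine memLp_top_of_bound
      (Complex.continuous_ofReal.comp Real.continuous_arctan).aestronglyMeasurable (Real.pi / 2)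
      (.of_forall fun x => ?_)
    rw [Complex.norm_real, Real.norm_eq_abs, abs_le]
    exact ⟨(Real.neg_pi_div_two_lt_arctan x).le, (Real.arctan_lt_pi_div_two x).le⟩
  refine ⟨S.indicator fun x => f x - m,
    ((hf.sub (memLp_const m)).indicator hS).mono_exponent le_top, ?_, ?_,
    fun x hx => Set.indicator_of_notMem hx _⟩
  · rw [integral_indicator hS]
    exact integral_sub_average _ f
  · have hlevel : μ {x | f x = m} = 0 :=
      Set.Subsingleton.measure_zero (fun x hx y hy =>
        Real.arctan_injective (Complex.ofReal_injective (hx.trans hy.symm))) μ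
    rw [Filter.EventuallyEq, ae_iff]
    refine fun h0 => hμS (measure_mono_null (fun x hx => ?_) (measure_union_null h0 hlevel))
    by_cases hfx : f x = m
    · exact Or.inr hfx
    · left
      simp [hx, sub_eq_zero, hfx]

variable {α : Type*} [MeasurableSpace α]

def IsA₀ (μ : Measure α) (g : ℝ) (u H : α → ℝ)
    (A : (Lp ℂ 2 μ × Lp ℂ 2 μ) →L[ℂ] (Lp ℂ 2 μ × Lp ℂ 2 μ)) : Prop :=
  ∀ φ : Lp ℂ 2 μ × Lp ℂ 2 μ,
    ((A φ).1 : α → ℂ) =ᵐ[μ]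
      (fun x => (u x : ℂ) * (φ.1 : α → ℂ) x + (H x : ℂ) * (φ.2 : α → ℂ) x) ∧
    ((A φ).2 : α → ℂ) =ᵐ[μ]
      (fun x => (g : ℂ) * (∫ y, (φ.1 : α → ℂ) y ∂μ) + (u x : ℂ) * (φ.2 : α → ℂ) x)

namespace IsA₀

variable {μ : Measure α} {g : ℝ} {u H : α → ℝ}
  {A : (Lp ℂ 2 μ × Lp ℂ 2 μ) →L[ℂ] (Lp ℂ 2 μ × Lp ℂ 2 μ)}

theorem sub_apply_fst (hA : IsA₀ μ g u H A) (c : ℂ) (Φ : Lp ℂ 2 μ × Lp ℂ 2 μ) :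
    (((algebraMap ℂ _ c - A) Φ).1 : α → ℂ) =ᵐ[μ]
      fun x => (c - u x) * Φ.1 x - H x * Φ.2 x := by
  filter_upwards [Lp.coeFn_sub (c • Φ.1) (A Φ).1, Lp.coeFn_smul c Φ.1, (hA Φ).1]
    with x hsub hsmul hAx
  simp only [sub_apply, ContinuousLinearMap.algebraMap_apply, Prod.fst_sub,
    Prod.smul_fst, hsub, Pi.sub_apply, hsmul, Pi.smul_apply, smul_eq_mul, hAx]
  ring

theorem sub_apply_snd (hA : IsA₀ μ g u H A) (c : ℂ) (Φ : Lp ℂ 2 μ × Lp ℂ 2 μ) :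
    (((algebraMap ℂ _ c - A) Φ).2 : α → ℂ) =ᵐ[μ]
      fun x => (c - u x) * Φ.2 x - g * ∫ y, Φ.1 y ∂μ := by
  filter_upwards [Lp.coeFn_sub (c • Φ.2) (A Φ).2, Lp.coeFn_smul c Φ.2, (hA Φ).2]
    with x hsub hsmul hAx
  simp only [sub_apply, ContinuousLinearMap.algebraMap_apply, Prod.snd_sub,
    Prod.smul_snd, hsub, Pi.sub_apply, hsmul, Pi.smul_apply, smul_eq_mul, hAx]
  ring

theorem sub_apply_eq_iff (hA : IsA₀ μ g u H A) (c : ℂ) (Φ Ψ : Lp ℂ 2 μ × Lp ℂ 2 μ) :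
    (algebraMap ℂ _ c - A) Φ = Ψ ↔
      (fun x => (c - u x) * Φ.1 x - H x * Φ.2 x) =ᵐ[μ] Ψ.1 ∧
      (fun x => (c - u x) * Φ.2 x - g * ∫ y, Φ.1 y ∂μ) =ᵐ[μ] Ψ.2 := by
  rw [Prod.ext_iff, Lp.ext_iff, Lp.ext_iff]
  exact and_congr ⟨(hA.sub_apply_fst c Φ).symm.trans, (hA.sub_apply_fst c Φ).trans⟩
    ⟨(hA.sub_apply_snd c Φ).symm.trans, (hA.sub_apply_snd c Φ).trans⟩

variable {c : ℂ}

theorem eq_zero_of_sub_apply_eq_zero (hA : IsA₀ μ g u H A)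
    (hc : c ∉ essRange μ fun x => (u x : ℂ)) (hF : ∫ x, (g : ℂ) * H x / (c - u x) ^ 2 ∂μ ≠ 1)
    {Φ : Lp ℂ 2 μ × Lp ℂ 2 μ} (hΦ : (algebraMap ℂ _ c - A) Φ = 0) : Φ = 0 := by
  obtain ⟨h₁, h₂⟩ := (hA.sub_apply_eq_iff c Φ 0).1 hΦ
  set J := ∫ y, Φ.1 y ∂μ
  have hΦ₁ : Φ.1 =ᵐ[μ] fun x => J * (g * H x / (c - u x) ^ 2) := by
    filter_upwards [h₁, h₂, ae_sub_ne_zero_of_notMem_essRange hc, Lp.coeFn_zero ℂ 2 μ]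
      with x h₁ h₂ hx h0
    simp only [Prod.fst_zero, Prod.snd_zero, h0, Pi.zero_apply] at h₁ h₂
    field_simp
    linear_combination (c - u x) * h₁ + H x * h₂
  have hJ : J * (1 - ∫ x, (g : ℂ) * H x / (c - u x) ^ 2 ∂μ) = 0 := by
    have : J = J * ∫ x, (g : ℂ) * H x / (c - u x) ^ 2 ∂μ :=
      (integral_congr_ae hΦ₁).trans (integral_const_mul J _)
    linear_combination this
  have hJ0 : J = 0 := (mul_eq_zero.1 hJ).resolve_right (sub_ne_zero.2 hF.symm)
  refine Prod.ext (Lp.ext ?_) (Lp.ext ?_)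
  · filter_upwards [hΦ₁, Lp.coeFn_zero ℂ 2 μ] with x hx h0
    simp only [hx, hJ0, zero_mul, Prod.fst_zero, h0, Pi.zero_apply]
  · filter_upwards [h₂, ae_sub_ne_zero_of_notMem_essRange hc, Lp.coeFn_zero ℂ 2 μ]
      with x h₂ hx h0
    simp only [Prod.snd_zero, h0, Pi.zero_apply, hJ0, mul_zero, sub_zero, mul_eq_zero] at h₂ ⊢
    exact h₂.resolve_left hx

section FiniteMeasure

variable [IsFiniteMeasure μ]

theorem exists_sub_apply_eq (hA : IsA₀ μ g u H A) (hu : AEMeasurable u μ) (hH : MemLp H ⊤ μ)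
    (hc : c ∉ essRange μ fun x => (u x : ℂ)) (hF : ∫ x, (g : ℂ) * H x / (c - u x) ^ 2 ∂μ ≠ 1)
    (Ψ : Lp ℂ 2 μ × Lp ℂ 2 μ) : ∃ Φ, (algebraMap ℂ _ c - A) Φ = Ψ := by
  have hv := memLp_top_inv_sub_of_notMem_essRange hu.complex_ofReal hc
  set F := ∫ x, (g : ℂ) * H x / (c - u x) ^ 2 ∂μ
  -- `(φ₁ J, φ₂ J)` solves the system pointwise when `∫ φ₁` is replaced by `J`
  set φ₂ : ℂ → α → ℂ := fun J x => (c - u x)⁻¹ * (Ψ.2 x + g * J)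
  set φ₁ : ℂ → α → ℂ := fun J x => (c - u x)⁻¹ * (Ψ.1 x + H x * φ₂ J x)
  have hφ₂ (J : ℂ) : MemLp (φ₂ J) 2 μ := ((Lp.memLp Ψ.2).add (memLp_const _)).mul' hv
  have hφ₁ (J : ℂ) : MemLp (φ₁ J) 2 μ :=
    ((Lp.memLp Ψ.1).add ((hφ₂ J).mul' hH.ofReal)).mul' hv
  have hw : Integrable (fun x => (g : ℂ) * H x / (c - u x) ^ 2) μ :=
    (memLp_top_div_sq_sub_of_notMem_essRange hu.complex_ofReal
      (hH.ofReal.const_mul (g : ℂ)) hc).integrable le_top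
  have hφ₁_int (J : ℂ) : ∫ x, φ₁ J x ∂μ = ∫ x, φ₁ 0 x ∂μ + J * F := by
    rw [← integral_const_mul, ← integral_add ((hφ₁ 0).integrable one_le_two) (hw.const_mul J)]
    congr 1 with x
    simp only [φ₁, φ₂, div_eq_mul_inv, ← inv_pow]
    ring
  set J := (∫ x, φ₁ 0 x ∂μ) / (1 - F)
  have hJ : ∫ x, φ₁ J x ∂μ = J := by
    rw [hφ₁_int]
    simp only [J]
    field_simp [sub_ne_zero.2 hF.symm]
    ring
  refine ⟨((hφ₁ J).toLp, (hφ₂ J).toLp), (hA.sub_apply_eq_iff c _ Ψ).2 ⟨?_, ?_⟩⟩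
  · filter_upwards [(hφ₁ J).coeFn_toLp, (hφ₂ J).coeFn_toLp,
      ae_sub_ne_zero_of_notMem_essRange hc] with x h₁ h₂ hx
    simp only [h₁, h₂, φ₁]
    field_simp
    ring
  · rw [integral_congr_ae (hφ₁ J).coeFn_toLp, hJ]
    filter_upwards [(hφ₂ J).coeFn_toLp, ae_sub_ne_zero_of_notMem_essRange hc] with x h₂ hx
    simp only [h₂, φ₂]
    field_simp
    ring

theorem mem_spectrum_of_integral_eq_one (hA : IsA₀ μ g u H A) (hu : AEMeasurable u μ)
    (hH : MemLp H ⊤ μ) (hc : c ∉ essRange μ fun x => (u x : ℂ))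
    (hF : ∫ x, (g : ℂ) * H x / (c - u x) ^ 2 ∂μ = 1) : c ∈ spectrum ℂ A := by
  have hu' : AEMeasurable (fun x => (u x : ℂ)) μ := hu.complex_ofReal
  have hv : MemLp (fun x => (g : ℂ) * (c - u x)⁻¹) 2 μ :=
    ((memLp_top_inv_sub_of_notMem_essRange hu' hc).const_mul _).mono_exponent le_top
  have hw : MemLp (fun x => (g : ℂ) * H x / (c - u x) ^ 2) 2 μ :=
    (memLp_top_div_sq_sub_of_notMem_essRange hu' (hH.ofReal.const_mul _) hc).mono_exponent le_top
  set Φ : Lp ℂ 2 μ × Lp ℂ 2 μ := (hw.toLp, hv.toLp)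
  have hΦ₁ : ∫ y, Φ.1 y ∂μ = 1 := (integral_congr_ae hw.coeFn_toLp).trans hF
  refine A.mem_spectrum_of_sub_apply_eq_zero (x := Φ) (fun h0 => ?_)
    ((hA.sub_apply_eq_iff c Φ 0).2 ⟨?_, ?_⟩)
  · rw [h0, Prod.fst_zero, integral_congr_ae (Lp.coeFn_zero ℂ 2 μ)] at hΦ₁
    simp at hΦ₁
  · filter_upwards [hw.coeFn_toLp, hv.coeFn_toLp, Lp.coeFn_zero ℂ 2 μ,
      ae_sub_ne_zero_of_notMem_essRange hc] with x h₁ h₂ h0 hx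
    simp only [Φ, h₁, h₂, Prod.fst_zero, h0, Pi.zero_apply]
    field_simp
    ring
  · rw [hΦ₁]
    filter_upwards [hv.coeFn_toLp, Lp.coeFn_zero ℂ 2 μ,
      ae_sub_ne_zero_of_notMem_essRange hc] with x h₂ h0 hx
    simp only [Φ, h₂, Prod.snd_zero, h0, Pi.zero_apply]
    field_simp
    ring

theorem notMem_spectrum (hA : IsA₀ μ g u H A) (hu : AEMeasurable u μ) (hH : MemLp H ⊤ μ)
    (hc : c ∉ essRange μ fun x => (u x : ℂ)) (hF : ∫ x, (g : ℂ) * H x / (c - u x) ^ 2 ∂μ ≠ 1) :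
    c ∉ spectrum ℂ A := by
  rw [spectrum.notMem_iff, ContinuousLinearMap.isUnit_iff_bijective]
  exact ⟨(injective_iff_map_eq_zero _).2 fun _ => hA.eq_zero_of_sub_apply_eq_zero hc hF,
    hA.exists_sub_apply_eq hu hH hc hF⟩

end FiniteMeasure

theorem essRange_subset_spectrum {μ : Measure ℝ} [IsFiniteMeasure μ] [NullSingletonClass μ]
    {g : ℝ} {u H : ℝ → ℝ} {A : (Lp ℂ 2 μ × Lp ℂ 2 μ) →L[ℂ] (Lp ℂ 2 μ × Lp ℂ 2 μ)}
    (hA : IsA₀ μ g u H A) (hu : AEMeasurable u μ) :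
    essRange μ (fun x => (u x : ℂ)) ⊆ spectrum ℂ A := by
  intro c hc
  refine A.mem_spectrum_of_forall_exists_norm_le fun ε hε => ?_
  have hnear : NullMeasurableSet {x | dist (u x : ℂ) c < ε} μ :=
    nullMeasurableSet_lt (hu.complex_ofReal.dist aemeasurable_const) aemeasurable_const
  obtain ⟨S, hSnear, hS, hSae⟩ := hnear.exists_measurable_subset_ae_eq
  obtain ⟨ψ, hψ, hψ_int, hψ_ne, hψS⟩ := exists_memLp_integral_eq_zero_of_measure_ne_zero hS
    ((measure_congr hSae).trans_ne (hc ε hε).ne')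
  set Φ : Lp ℂ 2 μ × Lp ℂ 2 μ := (hψ.toLp, 0)
  have h₂ : ((algebraMap ℂ _ c - A) Φ).2 = 0 := by
    refine Lp.ext ?_
    filter_upwards [hA.sub_apply_snd c Φ, Lp.coeFn_zero ℂ 2 μ] with x hx h0
    rw [hx, integral_congr_ae hψ.coeFn_toLp, hψ_int, mul_zero, sub_zero]
    exact (mul_eq_zero_of_right _ h0).trans h0.symm
  have h₁ : ‖((algebraMap ℂ _ c - A) Φ).1‖ ≤ ε * ‖Φ.1‖ := by
    refine Lp.norm_le_mul_norm_of_ae_le_mul ?_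
    filter_upwards [hA.sub_apply_fst c Φ, hψ.coeFn_toLp, Lp.coeFn_zero ℂ 2 μ] with x hx hψx h0
    simp only [hx, Φ, hψx, h0, Pi.zero_apply, mul_zero, sub_zero, norm_mul]
    by_cases hxS : x ∈ S
    · refine mul_le_mul_of_nonneg_right ?_ (norm_nonneg _)
      rw [← dist_eq_norm']
      exact (hSnear hxS).le
    · simp [hψS x hxS]
  refine ⟨Φ, fun h0 => hψ_ne ?_, ?_⟩
  · exact (hψ.toLp_eq_toLp_iff MemLp.zero).1
      ((congrArg Prod.fst h0).trans (MemLp.toLp_zero _).symm)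
  · rw [Prod.norm_def, h₂, norm_zero, max_eq_left (norm_nonneg _)]
    exact h₁.trans (mul_le_mul_of_nonneg_left (norm_fst_le Φ) hε.le)

end IsA₀

theorem stmt4_general (g : ℝ) (u H : ℝ → ℝ)
    (hu : MemLp u ⊤ μ01) (hH : MemLp H ⊤ μ01)
    (A : (Lp ℂ 2 μ01 × Lp ℂ 2 μ01) →L[ℂ] (Lp ℂ 2 μ01 × Lp ℂ 2 μ01))
    (hA : ∀ φ : Lp ℂ 2 μ01 × Lp ℂ 2 μ01,
      ((A φ).1 : ℝ → ℂ) =ᵐ[μ01]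
        (fun x => (u x : ℂ) * (φ.1 : ℝ → ℂ) x + (H x : ℂ) * (φ.2 : ℝ → ℂ) x) ∧
      ((A φ).2 : ℝ → ℂ) =ᵐ[μ01]
        (fun x => (g : ℂ) * (∫ y, (φ.1 : ℝ → ℂ) y ∂μ01) + (u x : ℂ) * (φ.2 : ℝ → ℂ) x)) :
    spectrum ℂ A =
      {c : ℂ | ∀ ε : ℝ, 0 < ε → 0 < μ01 {x | dist ((u x : ℂ)) c < ε}} ∪
      {c : ℂ | (¬ ∀ ε : ℝ, 0 < ε → 0 < μ01 {x | dist ((u x : ℂ)) c < ε}) ∧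
        ∫ x, (g : ℂ) * (H x : ℂ) / (c - (u x : ℂ)) ^ 2 ∂μ01 = 1} := by
  have hA' : IsA₀ μ01 g u H A := hA
  have hu' : AEMeasurable u μ01 := hu.1.aemeasurable
  ext c
  change _ ↔ c ∈ essRange μ01 (fun x => (u x : ℂ)) ∨ (c ∉ essRange μ01 _ ∧ _)
  by_cases hc : c ∈ essRange μ01 (fun x => (u x : ℂ))
  · exact iff_of_true (hA'.essRange_subset_spectrum hu' hc) (Or.inl hc)
  by_cases hF : ∫ x, (g : ℂ) * (H x : ℂ) / (c - (u x : ℂ)) ^ 2 ∂μ01 = 1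
  · exact iff_of_true (hA'.mem_spectrum_of_integral_eq_one hu' hH hc hF) (Or.inr ⟨hc, hF⟩)
  · exact iff_of_false (hA'.notMem_spectrum hu' hH hc hF) (by tauto)

/-- The spectrum of the operator `A₀` on `L²(I;ℂ)²` is the union of the
essential range of `ũ` and the set of `c` outside the essential range satisfying
`∫₀¹ gH/(c-ũ)² dλ = 1`. The operator `A₀(φ₁,φ₂) = (ũφ₁ + Hφ₂, g(∫φ₁) + ũφ₂)` is specified
through its almost-everywhere defining property. -/
theorem stmt4 (g : ℝ) (hg : 0 < g) (u H : ℝ → ℝ)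
    (hu : MemLp u ⊤ μ01) (hH : MemLp H ⊤ μ01)
    (hHpos : 0 < essInf H μ01)
    (A : (Lp ℂ 2 μ01 × Lp ℂ 2 μ01) →L[ℂ] (Lp ℂ 2 μ01 × Lp ℂ 2 μ01))
    (hA : ∀ φ : Lp ℂ 2 μ01 × Lp ℂ 2 μ01,
      ((A φ).1 : ℝ → ℂ) =ᵐ[μ01]
        (fun x => (u x : ℂ) * (φ.1 : ℝ → ℂ) x + (H x : ℂ) * (φ.2 : ℝ → ℂ) x) ∧
      ((A φ).2 : ℝ → ℂ) =ᵐ[μ01]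
        (fun x => (g : ℂ) * (∫ y, (φ.1 : ℝ → ℂ) y ∂μ01) + (u x : ℂ) * (φ.2 : ℝ → ℂ) x)) :
    spectrum ℂ A =
      {c : ℂ | ∀ ε : ℝ, 0 < ε → 0 < μ01 {x | dist ((u x : ℂ)) c < ε}} ∪
      {c : ℂ | (¬ ∀ ε : ℝ, 0 < ε → 0 < μ01 {x | dist ((u x : ℂ)) c < ε}) ∧
        ∫ x, (g : ℂ) * (H x : ℂ) / (c - (u x : ℂ)) ^ 2 ∂μ01 = 1} :=
  stmt4_general g u H hu hH A hA
end

section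
/- Let I = (0,1) with Lebesgue measure μ, g > 0, and ũ, H ∈ L^∞(I;ℝ) with essinf_I H > 0. Set ũ₋ = essinf_I ũ, ũ₊ = esssup_I ũ and h = ∫₀¹ H dλ. Then σ(A₀) ⊆ J₋ ∪ J₊ ∪ R, where J₋ = [ũ₋ − √(gh), ũ₋), J₊ = (ũ₊, ũ₊ + √(gh)] (viewed as subsets of ℝ ⊂ ℂ), and R = { z ∈ ℂ : ũ₋ ≤ Re z ≤ ũ₊, |Im z| ≤ √(gh), and |z − (ũ₋ + ũ₊)/2| ≤ (ũ₊ − ũ₋)/2 }. -/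
/-!
For `z` at positive distance from the essential range of `ũ`, the resolvent equation
`(z - A₀) φ = ψ` is solved explicitly: the second component gives `φ₂ = (ψ₂ + g s) / (z - ũ)`
with `s = ∫ φ₁`, the first then gives `φ₁`, and integrating `φ₁` determines `s` uniquely as soon
as `g τ(z) ≠ 1`, where `τ(z) = ∫ H / (z - ũ)²`. So it suffices to rule out `g τ(z) = 1` off the
enclosure. At distance `d > √(gh)` from `[ũ₋, ũ₊]` this follows from `|g τ(z)| ≤ g h / d² < 1`.
The remaining points are non-real and lie outside the disc with diameter `[ũ₋, ũ₊]`; there a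
real-linear functional `Re (κ ·)` is nonpositive on every `H / (z - v)²` with `v ∈ [ũ₋, ũ₊]`,
hence on `τ(z)`, but positive on `1 / g`.
-/

open MeasureTheory Filter

instance : IsProbabilityMeasure μ01 :=
  ⟨by simp [μ01, Real.volume_Ioo]⟩

lemma abs_im_le_norm_sub_ofReal (z : ℂ) (v : ℝ) : |z.im| ≤ ‖z - v‖ := by
  simpa using Complex.abs_im_le_norm (z - v)

lemma MeasureTheory.MemLp.ae_mem_Icc_essInf_essSup {α : Type*} [MeasurableSpace α]
    {μ : Measure α} {f : α → ℝ} (hf : MemLp f ⊤ μ) :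
    ∀ᵐ x ∂μ, f x ∈ Set.Icc (essInf f μ) (essSup f μ) := by
  have hb : IsBoundedUnder (· ≤ ·) (ae μ) fun x => |f x| := by
    obtain ⟨C, hC⟩ := eLpNormEssSup_lt_top_iff_isBoundedUnder.mp (by simpa using hf.2)
    exact ⟨C, by simpa [← NNReal.coe_le_coe] using hC⟩
  obtain ⟨hle, hge⟩ := isBoundedUnder_le_abs.mp hb
  filter_upwards [ae_essInf_le hge, ae_le_essSup hle] with x h1 h2 using ⟨h1, h2⟩

section Dispersion

variable {α : Type*} [MeasurableSpace α] {μ : Measure α} {u H : α → ℝ} {z : ℂ} {d : ℝ}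

noncomputable def dispersionIntegral (μ : Measure α) (u H : α → ℝ) (z : ℂ) : ℂ :=
  ∫ t, (H t : ℂ) / (z - u t) ^ 2 ∂μ

lemma ae_norm_inv_sub_le (hd : 0 < d) (hdist : ∀ᵐ t ∂μ, d ≤ ‖z - u t‖) :
    ∀ᵐ t ∂μ, ‖(z - u t)⁻¹‖ ≤ d⁻¹ := by
  filter_upwards [hdist] with t ht
  rw [norm_inv]
  exact inv_anti₀ hd ht

lemma memLp_top_inv_sub (hu : AEStronglyMeasurable u μ) (hd : 0 < d)
    (hdist : ∀ᵐ t ∂μ, d ≤ ‖z - u t‖) : MemLp (fun t => (z - u t)⁻¹) ⊤ μ :=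
  memLp_top_of_bound
    ((aemeasurable_const.sub (Complex.measurable_ofReal.comp_aemeasurable hu.aemeasurable)).inv
      |>.aestronglyMeasurable) _ (ae_norm_inv_sub_le hd hdist)

lemma integrable_div_sq_sub (hH : Integrable H μ) (hu : AEStronglyMeasurable u μ) (hd : 0 < d)
    (hdist : ∀ᵐ t ∂μ, d ≤ ‖z - u t‖) :
    Integrable (fun t => (H t : ℂ) / (z - u t) ^ 2) μ := by
  have hinv := memLp_top_inv_sub hu hd hdist
  refine (hH.ofReal.bdd_mul (c := d⁻¹ ^ 2) (hinv.1.pow 2) ?_).congr ?_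
  · filter_upwards [ae_norm_inv_sub_le hd hdist] with t ht
    rw [Pi.pow_apply, norm_pow]
    exact pow_le_pow_left₀ (norm_nonneg _) ht 2
  · exact .of_forall fun t => by simp [div_eq_mul_inv, mul_comm]

lemma norm_dispersionIntegral_le (hH0 : 0 ≤ᵐ[μ] H) (hH : Integrable H μ) (hd : 0 < d)
    (hdist : ∀ᵐ t ∂μ, d ≤ ‖z - u t‖) :
    ‖dispersionIntegral μ u H z‖ ≤ (∫ t, H t ∂μ) / d ^ 2 := by
  rw [← integral_div]
  refine norm_integral_le_of_norm_le (hH.div_const _) ?_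
  filter_upwards [hH0, hdist] with t h0 ht
  rw [norm_div, norm_pow, Complex.norm_real, Real.norm_of_nonneg h0]
  gcongr

lemma mul_dispersionIntegral_ne_one_of_far {g : ℝ} (hg : 0 ≤ g) (hH0 : 0 ≤ᵐ[μ] H)
    (hH : Integrable H μ) (hd : 0 < d) (hdist : ∀ᵐ t ∂μ, d ≤ ‖z - u t‖)
    (hgH : g * ∫ t, H t ∂μ < d ^ 2) :
    (g : ℂ) * dispersionIntegral μ u H z ≠ 1 := by
  intro h
  have hlt : ‖(g : ℂ) * dispersionIntegral μ u H z‖ < 1 := calc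
    ‖(g : ℂ) * dispersionIntegral μ u H z‖
      ≤ g * ((∫ t, H t ∂μ) / d ^ 2) := by
        rw [norm_mul, Complex.norm_real, Real.norm_of_nonneg hg]
        exact mul_le_mul_of_nonneg_left (norm_dispersionIntegral_le hH0 hH hd hdist) hg
    _ < 1 := by
        rw [mul_div_assoc', div_lt_one (by positivity)]
        exact hgH
  exact hlt.ne (by rw [h, norm_one])

-- The multiplier is chosen so that the real part equals
-- `2 z.im² ((z.re - um) (up - z.re) - z.im² - (v - um) (up - v)) / |z - v|⁴`.
lemma re_div_sq_sub_neg {um up v : ℝ} (hz : z.im ≠ 0) (hv : v ∈ Set.Icc um up)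
    (hdisk : (z.re - um) * (up - z.re) < z.im ^ 2) :
    ((z.im * (2 * z.im + (um + up - 2 * z.re) * Complex.I)) / (z - v) ^ 2).re < 0 := by
  have hN : 0 < Complex.normSq ((z - v) ^ 2) := by
    refine Complex.normSq_pos.mpr (pow_ne_zero 2 fun h => hz ?_)
    simpa using congrArg Complex.im h
  rw [Complex.div_re, ← add_div]
  refine div_neg_of_neg_of_pos ?_ hN
  simp only [pow_two, Complex.mul_re, Complex.mul_im, Complex.sub_re, Complex.sub_im,
    Complex.ofReal_re, Complex.ofReal_im, Complex.add_re, Complex.add_im, Complex.I_re,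
    Complex.I_im, Complex.re_ofNat, Complex.im_ofNat]
  have hy : 0 < z.im ^ 2 := by positivity
  nlinarith [mul_nonneg (sub_nonneg.mpr hv.1) (sub_nonneg.mpr hv.2)]

lemma mul_dispersionIntegral_ne_one_of_disk {g um up : ℝ} (hg : 0 < g) (hH0 : 0 ≤ᵐ[μ] H)
    (hH : Integrable H μ) (hu : AEStronglyMeasurable u μ)
    (hu_mem : ∀ᵐ t ∂μ, u t ∈ Set.Icc um up) (hz : z.im ≠ 0)
    (hdisk : (z.re - um) * (up - z.re) < z.im ^ 2) :
    (g : ℂ) * dispersionIntegral μ u H z ≠ 1 := by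
  intro h
  set κ : ℂ := z.im * (2 * z.im + (um + up - 2 * z.re) * Complex.I)
  have hτ : dispersionIntegral μ u H z = (g⁻¹ : ℝ) := by
    rw [eq_inv_of_mul_eq_one_right h, Complex.ofReal_inv]
  have hpos : 0 < (κ * dispersionIntegral μ u H z).re := by
    rw [hτ, Complex.re_mul_ofReal]
    have hre : κ.re = 2 * z.im ^ 2 := by simp [κ, sq, mul_left_comm]
    rw [hre]
    positivity
  have hint := (integrable_div_sq_sub hH hu (abs_pos.mpr hz)
    (.of_forall fun t => abs_im_le_norm_sub_ofReal z (u t))).const_mul κ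
  have hnonpos : (κ * dispersionIntegral μ u H z).re ≤ 0 := by
    rw [dispersionIntegral, ← integral_const_mul, ← Complex.reCLM_apply,
      ← ContinuousLinearMap.integral_comp_comm _ hint]
    refine integral_nonpos_of_ae ?_
    filter_upwards [hH0, hu_mem] with t h0 ht
    rw [Pi.zero_apply, Complex.reCLM_apply, mul_div_left_comm, Complex.re_ofReal_mul]
    exact mul_nonpos_of_nonneg_of_nonpos h0 (re_div_sq_sub_neg hz ht hdisk).le
  exact hpos.not_ge hnonpos

end Dispersion

section Resolvent

variable {α : Type*} [MeasurableSpace α] {μ : Measure α} {g : ℝ} {u H : α → ℝ}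
  {A : (Lp ℂ 2 μ × Lp ℂ 2 μ) →L[ℂ] (Lp ℂ 2 μ × Lp ℂ 2 μ)} {z : ℂ} {d : ℝ}

def IsOperatorA₀ (μ : Measure α) (g : ℝ) (u H : α → ℝ)
    (A : (Lp ℂ 2 μ × Lp ℂ 2 μ) →L[ℂ] (Lp ℂ 2 μ × Lp ℂ 2 μ)) : Prop :=
  ∀ φ : Lp ℂ 2 μ × Lp ℂ 2 μ,
    ((A φ).1 : α → ℂ) =ᵐ[μ] (fun x => (u x : ℂ) * (φ.1 : α → ℂ) x + (H x : ℂ) * (φ.2 : α → ℂ) x) ∧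
    ((A φ).2 : α → ℂ) =ᵐ[μ]
      (fun x => (g : ℂ) * (∫ y, (φ.1 : α → ℂ) y ∂μ) + (u x : ℂ) * (φ.2 : α → ℂ) x)

lemma IsOperatorA₀.smul_sub_apply_eq_iff (hA : IsOperatorA₀ μ g u H A)
    (Φ Ψ : Lp ℂ 2 μ × Lp ℂ 2 μ) :
    z • Φ - A Φ = Ψ ↔
      (∀ᵐ t ∂μ, (z - u t) * Φ.1 t - H t * Φ.2 t = Ψ.1 t) ∧
      (∀ᵐ t ∂μ, (z - u t) * Φ.2 t - g * ∫ s, Φ.1 s ∂μ = Ψ.2 t) := by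
  obtain ⟨hA₁, hA₂⟩ := hA Φ
  have h₁ : ⇑(z • Φ - A Φ).1 =ᵐ[μ] fun t => (z - u t) * Φ.1 t - H t * Φ.2 t := by
    filter_upwards [Lp.coeFn_sub (z • Φ.1) (A Φ).1, Lp.coeFn_smul z Φ.1, hA₁]
      with t hsub hsmul hAt
    simp only [Prod.fst_sub, Prod.smul_fst, hsub, Pi.sub_apply, hsmul, Pi.smul_apply,
      smul_eq_mul, hAt]
    ring
  have h₂ : ⇑(z • Φ - A Φ).2 =ᵐ[μ] fun t => (z - u t) * Φ.2 t - g * ∫ s, Φ.1 s ∂μ := by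
    filter_upwards [Lp.coeFn_sub (z • Φ.2) (A Φ).2, Lp.coeFn_smul z Φ.2, hA₂]
      with t hsub hsmul hAt
    simp only [Prod.snd_sub, Prod.smul_snd, hsub, Pi.sub_apply, hsmul, Pi.smul_apply,
      smul_eq_mul, hAt]
    ring
  rw [Prod.ext_iff, Lp.ext_iff, Lp.ext_iff, h₁.congr_left, h₂.congr_left]
  rfl

lemma ae_sub_ne_zero (hd : 0 < d) (hdist : ∀ᵐ t ∂μ, d ≤ ‖z - u t‖) :
    ∀ᵐ t ∂μ, z - u t ≠ 0 :=
  hdist.mono fun t ht h => by rw [h, norm_zero] at ht; exact ht.not_gt hd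

lemma IsOperatorA₀.eq_zero_of_smul_sub_apply_eq_zero (hA : IsOperatorA₀ μ g u H A)
    (hd : 0 < d) (hdist : ∀ᵐ t ∂μ, d ≤ ‖z - u t‖)
    (hτ : (g : ℂ) * dispersionIntegral μ u H z ≠ 1) {Φ : Lp ℂ 2 μ × Lp ℂ 2 μ}
    (hΦ : z • Φ - A Φ = 0) : Φ = 0 := by
  obtain ⟨h₁, h₂⟩ := (hA.smul_sub_apply_eq_iff Φ 0).mp hΦ
  set s := ∫ t, Φ.1 t ∂μ
  have hΦ₂ : ∀ᵐ t ∂μ, Φ.2 t = g * s / (z - u t) := by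
    filter_upwards [h₂, ae_sub_ne_zero hd hdist, Lp.coeFn_zero ℂ 2 μ] with t ht hne h0
    rw [Prod.snd_zero, h0, Pi.zero_apply] at ht
    rw [eq_div_iff hne]
    linear_combination ht
  have hΦ₁ : ∀ᵐ t ∂μ, Φ.1 t = g * s * (H t / (z - u t) ^ 2) := by
    filter_upwards [h₁, hΦ₂, ae_sub_ne_zero hd hdist, Lp.coeFn_zero ℂ 2 μ]
      with t ht ht₂ hne h0
    rw [Prod.fst_zero, h0, Pi.zero_apply] at ht
    rw [sq, ← div_div, show (g : ℂ) * s * (H t / (z - u t) / (z - u t))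
      = H t * (g * s / (z - u t)) / (z - u t) by ring, eq_div_iff hne, ← ht₂]
    linear_combination ht
  have hs : s = 0 := by
    have hs : s = g * s * dispersionIntegral μ u H z := by
      rw [dispersionIntegral, ← integral_const_mul]
      exact integral_congr_ae hΦ₁
    have : s * (1 - g * dispersionIntegral μ u H z) = 0 := by linear_combination hs
    exact (mul_eq_zero.mp this).resolve_right (sub_ne_zero.mpr hτ.symm)
  refine Prod.ext (Lp.ext ?_) (Lp.ext ?_)
  · filter_upwards [hΦ₁, Lp.coeFn_zero ℂ 2 μ] with t ht h0
    rw [ht, hs, Prod.fst_zero, h0]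
    simp
  · filter_upwards [hΦ₂, Lp.coeFn_zero ℂ 2 μ] with t ht h0
    rw [ht, hs, Prod.snd_zero, h0]
    simp

lemma IsOperatorA₀.exists_smul_sub_apply_eq [IsFiniteMeasure μ] (hA : IsOperatorA₀ μ g u H A)
    (hu : AEStronglyMeasurable u μ) (hH : MemLp H ⊤ μ) (hd : 0 < d)
    (hdist : ∀ᵐ t ∂μ, d ≤ ‖z - u t‖) (hτ : (g : ℂ) * dispersionIntegral μ u H z ≠ 1)
    (Ψ : Lp ℂ 2 μ × Lp ℂ 2 μ) : ∃ Φ, z • Φ - A Φ = Ψ := by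
  set w : α → ℂ := fun t => (z - u t)⁻¹
  have hw : MemLp w ⊤ μ := memLp_top_inv_sub hu hd hdist
  have hw₁ : ∀ᵐ t ∂μ, (z - u t) * w t = 1 :=
    (ae_sub_ne_zero hd hdist).mono fun t ht => mul_inv_cancel₀ ht
  -- the solution of the system once the value `s` of `∫ Φ.1` is known
  set sol₂ : ℂ → α → ℂ := fun s t => w t * (Ψ.2 t + g * s)
  set sol₁ : ℂ → α → ℂ := fun s t => w t * (Ψ.1 t + H t * sol₂ s t)
  have hsol₂ (s : ℂ) : MemLp (sol₂ s) 2 μ := ((Lp.memLp Ψ.2).add (memLp_const _)).mul' hw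
  have hsol₁ (s : ℂ) : MemLp (sol₁ s) 2 μ :=
    ((Lp.memLp Ψ.1).add ((hsol₂ s).mul' hH.ofReal)).mul' hw
  have hint (s : ℂ) :
      ∫ t, sol₁ s t ∂μ = ∫ t, sol₁ 0 t ∂μ + g * s * dispersionIntegral μ u H z := by
    rw [dispersionIntegral, ← integral_const_mul, ← integral_add
      ((hsol₁ 0).integrable one_le_two)
      ((integrable_div_sq_sub (hH.integrable le_top) hu hd hdist).const_mul _)]
    congr 1 with t
    simp only [sol₁, sol₂, w, div_eq_mul_inv, ← inv_pow]
    ring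
  set s := (∫ t, sol₁ 0 t ∂μ) / (1 - g * dispersionIntegral μ u H z) with hs_def
  have hs : ∫ t, (hsol₁ s).toLp (sol₁ s) t ∂μ = s := by
    rw [integral_congr_ae (hsol₁ s).coeFn_toLp, hint, hs_def]
    field_simp [sub_ne_zero.mpr hτ.symm]
    ring
  refine ⟨((hsol₁ s).toLp, (hsol₂ s).toLp), (hA.smul_sub_apply_eq_iff _ _).mpr ⟨?_, ?_⟩⟩
  · filter_upwards [(hsol₁ s).coeFn_toLp, (hsol₂ s).coeFn_toLp, hw₁] with t h₁ h₂ ht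
    rw [h₁, h₂]
    linear_combination (Ψ.1 t + H t * sol₂ s t) * ht
  · filter_upwards [(hsol₂ s).coeFn_toLp, hw₁] with t h₂ ht
    rw [hs, h₂]
    linear_combination (Ψ.2 t + g * s) * ht

lemma IsOperatorA₀.notMem_spectrum [IsFiniteMeasure μ] (hA : IsOperatorA₀ μ g u H A)
    (hu : AEStronglyMeasurable u μ) (hH : MemLp H ⊤ μ) (hd : 0 < d)
    (hdist : ∀ᵐ t ∂μ, d ≤ ‖z - u t‖) (hτ : (g : ℂ) * dispersionIntegral μ u H z ≠ 1) :
    z ∉ spectrum ℂ A := by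
  have happ (Φ : Lp ℂ 2 μ × Lp ℂ 2 μ) : (algebraMap ℂ _ z - A) Φ = z • Φ - A Φ := by
    simp [Algebra.algebraMap_eq_smul_one]
  rw [spectrum.notMem_iff, ContinuousLinearMap.isUnit_iff_bijective]
  refine ⟨(injective_iff_map_eq_zero _).mpr fun Φ hΦ => ?_, fun Ψ => ?_⟩
  · exact hA.eq_zero_of_smul_sub_apply_eq_zero hd hdist hτ ((happ Φ).symm.trans hΦ)
  · obtain ⟨Φ, hΦ⟩ := hA.exists_smul_sub_apply_eq hu hH hd hdist hτ Ψ
    exact ⟨Φ, (happ Φ).trans hΦ⟩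

end Resolvent

def spectralEnclosure (um up r : ℝ) : Set ℂ :=
  ((fun r : ℝ => (r : ℂ)) '' Set.Ico (um - r) um) ∪
    ((fun r : ℝ => (r : ℂ)) '' Set.Ioc up (up + r)) ∪
    {z : ℂ | um ≤ z.re ∧ z.re ≤ up ∧ |z.im| ≤ r ∧
      ‖z - (((um + up) / 2 : ℝ) : ℂ)‖ ≤ (up - um) / 2}

lemma far_or_disk_of_notMem_spectralEnclosure {um up r : ℝ} {z : ℂ} (hle : um ≤ up)
    (hr : 0 ≤ r) (hz : z ∉ spectralEnclosure um up r) :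
    (∃ d, r < d ∧ ∀ v ∈ Set.Icc um up, d ≤ ‖z - v‖) ∨
      (z.im ≠ 0 ∧ (z.re - um) * (up - z.re) < z.im ^ 2) := by
  simp only [spectralEnclosure, Set.mem_union, Set.mem_image, Set.mem_ofPred_eq, not_or,
    not_exists, not_and] at hz
  obtain ⟨⟨hleft, hright⟩, hrect⟩ := hz
  by_cases hbig : r < |z.im|
  · exact .inl ⟨|z.im|, hbig, fun v _ => abs_im_le_norm_sub_ofReal z v⟩
  rw [not_lt] at hbig
  by_cases him : z.im = 0
  · have hz : (z.re : ℂ) = z := Complex.ext (by simp) (by simp [him])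
    have hdist (v : ℝ) : ‖z - v‖ = |z.re - v| := by
      rw [← Real.norm_eq_abs, ← Complex.norm_real, Complex.ofReal_sub, hz]
    left
    by_cases hlo : z.re < um
    · refine ⟨um - z.re, lt_of_not_ge fun h => hleft z.re ⟨by linarith, hlo⟩ hz, fun v hv => ?_⟩
      rw [hdist]
      linarith [neg_abs_le (z.re - v), hv.1]
    by_cases hhi : up < z.re
    · refine ⟨z.re - up, lt_of_not_ge fun h => hright z.re ⟨hhi, by linarith⟩ hz, fun v hv => ?_⟩
      rw [hdist]
      linarith [le_abs_self (z.re - v), hv.2]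
    refine (hrect (not_lt.mp hlo) (not_lt.mp hhi) (by rwa [him, abs_zero]) ?_).elim
    rw [hdist, abs_le]
    constructor <;> linarith
  · refine .inr ⟨him, ?_⟩
    have hy : 0 < z.im ^ 2 := by positivity
    by_cases hin : um ≤ z.re ∧ z.re ≤ up
    · have hfar : (up - um) / 2 < ‖z - (((um + up) / 2 : ℝ) : ℂ)‖ :=
        lt_of_not_ge (hrect hin.1 hin.2 hbig)
      have hsq : ‖z - (((um + up) / 2 : ℝ) : ℂ)‖ ^ 2 = (z.re - (um + up) / 2) ^ 2 + z.im ^ 2 := by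
        rw [Complex.sq_norm, Complex.normSq_apply]
        simp only [Complex.sub_re, Complex.sub_im, Complex.ofReal_re, Complex.ofReal_im, sub_zero]
        ring
      nlinarith
    · rw [not_and_or, not_le, not_le] at hin
      rcases hin with h | h <;> nlinarith

/-- Localization of the spectrum of `A₀`: with `ũ₋ = essinf ũ`,
`ũ₊ = esssup ũ` and `h = ∫₀¹ H dλ`, one has
`σ(A₀) ⊆ J₋ ∪ J₊ ∪ R` where `J₋ = [ũ₋ - √(gh), ũ₋)`, `J₊ = (ũ₊, ũ₊ + √(gh)]` and
`R = {z : ũ₋ ≤ Re z ≤ ũ₊, |Im z| ≤ √(gh), |z - (ũ₋+ũ₊)/2| ≤ (ũ₊-ũ₋)/2}`. -/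
theorem stmt8 (g : ℝ) (hg : 0 < g) (u H : ℝ → ℝ)
    (hu : MemLp u ⊤ μ01) (hH : MemLp H ⊤ μ01)
    (hHpos : 0 < essInf H μ01)
    (A : (Lp ℂ 2 μ01 × Lp ℂ 2 μ01) →L[ℂ] (Lp ℂ 2 μ01 × Lp ℂ 2 μ01))
    (hA : ∀ φ : Lp ℂ 2 μ01 × Lp ℂ 2 μ01,
      ((A φ).1 : ℝ → ℂ) =ᵐ[μ01]
        (fun x => (u x : ℂ) * (φ.1 : ℝ → ℂ) x + (H x : ℂ) * (φ.2 : ℝ → ℂ) x) ∧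
      ((A φ).2 : ℝ → ℂ) =ᵐ[μ01]
        (fun x => (g : ℂ) * (∫ y, (φ.1 : ℝ → ℂ) y ∂μ01) + (u x : ℂ) * (φ.2 : ℝ → ℂ) x))
    (um up h : ℝ)
    (hum : um = essInf u μ01) (hup : up = essSup u μ01) (hh : h = ∫ x, H x ∂μ01) :
    spectrum ℂ A ⊆
      ((fun r : ℝ => (r : ℂ)) '' Set.Ico (um - Real.sqrt (g * h)) um) ∪
      ((fun r : ℝ => (r : ℂ)) '' Set.Ioc up (up + Real.sqrt (g * h))) ∪
      {z : ℂ | um ≤ z.re ∧ z.re ≤ up ∧ |z.im| ≤ Real.sqrt (g * h) ∧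
        ‖z - (((um + up) / 2 : ℝ) : ℂ)‖ ≤ (up - um) / 2} := by
  have hu_mem : ∀ᵐ t ∂μ01, u t ∈ Set.Icc um up := hum ▸ hup ▸ hu.ae_mem_Icc_essInf_essSup
  have hH0 : 0 ≤ᵐ[μ01] H :=
    hH.ae_mem_Icc_essInf_essSup.mono fun t ht => hHpos.le.trans ht.1
  have hle : um ≤ up := by
    obtain ⟨t, ht⟩ := hu_mem.exists
    exact ht.1.trans ht.2
  have hgh : 0 ≤ g * h := mul_nonneg hg.le (hh ▸ integral_nonneg_of_ae hH0)
  have hHint := hH.integrable le_top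
  intro z hz
  by_contra hz'
  rcases far_or_disk_of_notMem_spectralEnclosure hle (Real.sqrt_nonneg _) hz' with
    ⟨d, hrd, hd⟩ | ⟨him, hdisk⟩
  · have hd0 : 0 < d := (Real.sqrt_nonneg _).trans_lt hrd
    have hdist : ∀ᵐ t ∂μ01, d ≤ ‖z - u t‖ := hu_mem.mono fun t ht => hd _ ht
    have hgh_lt : g * ∫ t, H t ∂μ01 < d ^ 2 := by
      rw [← hh, ← Real.sq_sqrt hgh]
      exact pow_lt_pow_left₀ hrd (Real.sqrt_nonneg _) two_ne_zero
    exact IsOperatorA₀.notMem_spectrum hA hu.1 hH hd0 hdist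
      (mul_dispersionIntegral_ne_one_of_far hg.le hH0 hHint hd0 hdist hgh_lt) hz
  · exact IsOperatorA₀.notMem_spectrum hA hu.1 hH (abs_pos.mpr him)
      (.of_forall fun t => abs_im_le_norm_sub_ofReal z (u t))
      (mul_dispersionIntegral_ne_one_of_disk hg hH0 hHint hu.1 hu_mem him hdisk) hz
end

section
/- Let g > 0, a ≠ 0 and b > 0 satisfy b·tanh(b) > 1 and |a| < √(1 − (b·tanh(b))⁻¹). Define H(λ) = g⁻¹ and ũ(λ) = a·tanh(b(2λ − 1)) for λ ∈ (0,1). Then there exists ν > 0 such that ∫₀¹ g H(λ)/(iν − ũ(λ))² dλ = 1; consequently the operator A₀ associated to (H, ũ) has at least two complex-conjugate eigenvalues c = ±iν with Re c = 0 and Im c ≠ 0. -/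
open MeasureTheory

/-!
Writing `t = tanh y`, the function `y ↦ (iν - a tanh y)⁻²` has an elementary primitive (partial
fractions in `t`), so `∫₀¹ (iν - ũ)⁻² = P(ν) / b` for an explicit real function `P`; the imaginary
part cancels because `ũ` is odd about `1/2`. As a function of `ν ≥ 0`, `P(ν) / b` is continuous,
equals `(1 - (b tanh b)⁻¹) / a² > 1` at `ν = 0` and is negative at `ν = |a|`, so the intermediate
value theorem gives `ν > 0` with `P(ν) / b = 1`.

If `Im c ≠ 0` and `g ∫ H / (c - ũ)² = 1`, then `(H / (c - ũ)², 1 / (c - ũ))` is an eigenvector of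
`A₀` for `c`; as `ũ` and `H` are real, the same relation then holds for `c̄`.
-/

open Real

theorem Real.hasDerivAt_tanh (y : ℝ) : HasDerivAt tanh (1 - tanh y ^ 2) y := by
  have hc := (cosh_pos y).ne'
  have htanh : tanh = sinh / cosh := funext tanh_eq_sinh_div_cosh
  refine htanh ▸ ((hasDerivAt_sinh y).div (hasDerivAt_cosh y) hc).congr_deriv ?_
  simp only [Pi.div_apply]
  field_simp

@[fun_prop]
theorem Real.continuous_tanh : Continuous tanh :=
  continuous_iff_continuousAt.2 fun y => (hasDerivAt_tanh y).continuousAt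

theorem Real.tanh_pos {y : ℝ} (hy : 0 < y) : 0 < tanh y := by
  rw [tanh_eq_sinh_div_cosh]
  exact div_pos (sinh_pos_iff.2 hy) (cosh_pos y)

-- At `ν = 0` the junk value `c / 0 = 0` gives `0`, which is also the limit.
theorem continuous_mul_arctan_div (c : ℝ) : Continuous fun ν : ℝ => ν * arctan (c / ν) := by
  refine continuous_iff_continuousAt.2 fun ν => ?_
  rcases eq_or_ne ν 0 with rfl | hν
  · have hbound : ∀ ν : ℝ, ‖ν * arctan (c / ν)‖ ≤ π / 2 * |ν| := fun ν => by
      rw [norm_mul, Real.norm_eq_abs, mul_comm]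
      gcongr
      exact abs_le.2 ⟨(neg_pi_div_two_lt_arctan _).le, (arctan_lt_pi_div_two _).le⟩
    have h0 : Filter.Tendsto (fun ν : ℝ => π / 2 * |ν|) (nhds 0) (nhds 0) :=
      (show Continuous fun ν : ℝ => π / 2 * |ν| by fun_prop).tendsto' 0 0 (by simp)
    simpa [ContinuousAt] using squeeze_zero_norm hbound h0
  · exact continuousAt_id.mul (continuous_arctan.continuousAt.comp
      (continuousAt_const.div continuousAt_id hν))

/- Real and imaginary parts of a primitive of `y ↦ (iν - a tanh y)⁻²`. Grouping the arctan term as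
`ν * arctan (· / ν)` makes `primitiveRe a ν y` continuous in `ν` at `0`. -/
noncomputable def primitiveRe (a ν y : ℝ) : ℝ :=
  ((a ^ 2 - ν ^ 2) * y - 2 * a * (ν * arctan (a * tanh y / ν))) / (a ^ 2 + ν ^ 2) ^ 2
    - a ^ 2 * tanh y / ((a ^ 2 + ν ^ 2) * (a ^ 2 * tanh y ^ 2 + ν ^ 2))

noncomputable def primitiveIm (a ν y : ℝ) : ℝ :=
  a * ν * ((log (a ^ 2 * tanh y ^ 2 + ν ^ 2) - log (1 - tanh y ^ 2)) / (a ^ 2 + ν ^ 2) ^ 2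
    - 1 / ((a ^ 2 + ν ^ 2) * (a ^ 2 * tanh y ^ 2 + ν ^ 2)))

theorem hasDerivAt_primitiveRe (a : ℝ) {ν : ℝ} (hν : ν ≠ 0) (y : ℝ) :
    HasDerivAt (primitiveRe a ν)
      ((a ^ 2 * tanh y ^ 2 - ν ^ 2) / (a ^ 2 * tanh y ^ 2 + ν ^ 2) ^ 2) y := by
  have hN : 0 < a ^ 2 + ν ^ 2 := by positivity
  have hD : 0 < a ^ 2 * tanh y ^ 2 + ν ^ 2 := by positivity
  have ht := hasDerivAt_tanh y
  have hatan := (((ht.const_mul a).div_const ν).arctan).const_mul ν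
  have hD' := ((ht.pow 2).const_mul (a ^ 2)).add_const (ν ^ 2)
  have h := ((((hasDerivAt_id y).const_mul (a ^ 2 - ν ^ 2)).sub
    (hatan.const_mul (2 * a))).div_const ((a ^ 2 + ν ^ 2) ^ 2)).sub
    ((ht.const_mul (a ^ 2)).div (hD'.const_mul (a ^ 2 + ν ^ 2)) (by positivity))
  refine h.congr_deriv ?_
  simp only [Pi.pow_apply, Nat.cast_ofNat, Nat.add_one_sub_one, pow_one]
  field_simp
  ring

theorem hasDerivAt_primitiveIm (a : ℝ) {ν : ℝ} (hν : ν ≠ 0) (y : ℝ) :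
    HasDerivAt (primitiveIm a ν)
      (2 * a * ν * tanh y / (a ^ 2 * tanh y ^ 2 + ν ^ 2) ^ 2) y := by
  have hN : 0 < a ^ 2 + ν ^ 2 := by positivity
  have hD : 0 < a ^ 2 * tanh y ^ 2 + ν ^ 2 := by positivity
  have h1 : 0 < 1 - tanh y ^ 2 := by linarith [tanh_sq_lt_one y]
  have ht := hasDerivAt_tanh y
  have hD' := ((ht.pow 2).const_mul (a ^ 2)).add_const (ν ^ 2)
  have h := ((((hD'.log hD.ne').sub (((ht.pow 2).const_sub 1).log h1.ne')).div_const
    ((a ^ 2 + ν ^ 2) ^ 2)).sub ((hasDerivAt_const y (1:ℝ)).div (hD'.const_mul (a ^ 2 + ν ^ 2))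
      (by positivity))).const_mul (a * ν)
  refine h.congr_deriv ?_
  simp only [Pi.pow_apply, Nat.cast_ofNat, Nat.add_one_sub_one, pow_one]
  field_simp
  ring

theorem inv_sq_I_mul_sub_ofReal {ν : ℝ} (hν : ν ≠ 0) (s : ℝ) :
    ((Complex.I * ν - s) ^ 2)⁻¹ = (((s ^ 2 - ν ^ 2) / (s ^ 2 + ν ^ 2) ^ 2 : ℝ) : ℂ) +
      ((2 * ν * s / (s ^ 2 + ν ^ 2) ^ 2 : ℝ) : ℂ) * Complex.I := by
  have hD : (s : ℂ) ^ 2 + (ν : ℂ) ^ 2 ≠ 0 := by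
    exact_mod_cast (by positivity : s ^ 2 + ν ^ 2 ≠ 0)
  -- `(Iν - s)² = (s² - ν²) - 2νs I`, whose product with its conjugate is `(s² + ν²)²`.
  refine (eq_inv_of_mul_eq_one_left ?_).symm
  push_cast
  field_simp
  linear_combination (2 * s * ν ^ 3 * Complex.I - 3 * s ^ 2 * ν ^ 2 - ν ^ 4 : ℂ) * Complex.I_sq

theorem hasDerivAt_primitive (a : ℝ) {ν : ℝ} (hν : ν ≠ 0) (y : ℝ) :
    HasDerivAt (fun y => (primitiveRe a ν y : ℂ) + primitiveIm a ν y * Complex.I)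
      ((Complex.I * ν - ((a * tanh y : ℝ) : ℂ)) ^ 2)⁻¹ y := by
  rw [inv_sq_I_mul_sub_ofReal hν, mul_pow]
  exact (hasDerivAt_primitiveRe a hν y).ofReal_comp.add
    ((hasDerivAt_primitiveIm a hν y).ofReal_comp.mul_const _) |>.congr_deriv (by ring_nf)

theorem primitiveRe_neg (a ν y : ℝ) : primitiveRe a ν (-y) = -primitiveRe a ν y := by
  simp only [primitiveRe, tanh_neg, mul_neg, neg_div, arctan_neg]
  ring

theorem primitiveIm_neg (a ν y : ℝ) : primitiveIm a ν (-y) = primitiveIm a ν y := by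
  simp only [primitiveIm, tanh_neg, neg_sq]

theorem continuous_inv_sq_I_mul_sub {ν : ℝ} (hν : ν ≠ 0) {f : ℝ → ℝ} (hf : Continuous f) :
    Continuous fun y => ((Complex.I * ν - (f y : ℂ)) ^ 2)⁻¹ := by
  refine Continuous.inv₀ (by fun_prop) fun y h => hν ?_
  simpa using congrArg Complex.im (pow_eq_zero_iff two_ne_zero |>.1 h)

theorem intervalIntegral_inv_sq_I_mul_sub_tanh (a : ℝ) {ν : ℝ} (hν : ν ≠ 0) (b : ℝ) :
    ∫ y in -b..b, ((Complex.I * ν - ((a * tanh y : ℝ) : ℂ)) ^ 2)⁻¹ = 2 * primitiveRe a ν b := by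
  rw [intervalIntegral.integral_eq_sub_of_hasDerivAt (fun y _ => hasDerivAt_primitive a hν y)
    ((continuous_inv_sq_I_mul_sub hν (by fun_prop)).intervalIntegrable _ _),
    primitiveRe_neg, primitiveIm_neg]
  push_cast
  ring

instance inst_s11 : IsFiniteMeasure μ01 :=
  isFiniteMeasure_restrict.2 (by simp)

theorem integral_inv_sq_I_mul_sub_tanh_profile (a : ℝ) {ν b : ℝ} (hν : ν ≠ 0) (hb : b ≠ 0) :
    ∫ x, ((Complex.I * ν - ((a * tanh (b * (2 * x - 1)) : ℝ) : ℂ)) ^ 2)⁻¹ ∂μ01 =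
      ((primitiveRe a ν b / b : ℝ) : ℂ) := by
  rw [μ01, ← integral_Ioc_eq_integral_Ioo, ← intervalIntegral.integral_of_le zero_le_one]
  have h := intervalIntegral.integral_comp_mul_sub
    (fun y => ((Complex.I * ν - ((a * tanh y : ℝ) : ℂ)) ^ 2)⁻¹) (mul_ne_zero two_ne_zero hb) b
    (a := 0) (b := 1)
  simp only [mul_zero, zero_sub, mul_one, two_mul, add_sub_cancel_right] at h
  simp_rw [show ∀ x : ℝ, b * (2 * x - 1) = (b + b) * x - b by intro x; ring, h,
    intervalIntegral_inv_sq_I_mul_sub_tanh a hν b, Complex.real_smul]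
  push_cast
  field_simp
  ring

theorem continuous_primitiveRe {a y : ℝ} (ha : a ≠ 0) (hy : tanh y ≠ 0) :
    Continuous fun ν => primitiveRe a ν y := by
  have := continuous_mul_arctan_div (a * tanh y)
  unfold primitiveRe
  refine Continuous.sub (Continuous.div (by fun_prop) (by fun_prop) fun ν => by positivity)
    (Continuous.div (by fun_prop) (by fun_prop) fun ν => by positivity)

theorem primitiveRe_zero {a y : ℝ} (ha : a ≠ 0) (hy : tanh y ≠ 0) :
    primitiveRe a 0 y = (y - (tanh y)⁻¹) / a ^ 2 := by
  simp only [primitiveRe]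
  field_simp
  ring

theorem mul_arctan_mul_nonneg (a : ℝ) {t : ℝ} (ht : 0 ≤ t) : 0 ≤ a * arctan (a * t) := by
  rcases le_total 0 a with h | h
  · exact mul_nonneg h (arctan_nonneg.2 (mul_nonneg h ht))
  · exact mul_nonneg_of_nonpos_of_nonpos h
      (arctan_le_zero.2 (mul_nonpos_of_nonpos_of_nonneg h ht))

theorem primitiveRe_abs_neg {a y : ℝ} (ha : a ≠ 0) (hy : 0 < y) : primitiveRe a |a| y < 0 := by
  have hT := tanh_pos hy
  have harctan : 0 ≤ 2 * a * (|a| * arctan (a * tanh y / |a|)) := by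
    rw [mul_div_assoc]
    nlinarith [mul_arctan_mul_nonneg a (div_nonneg hT.le (abs_nonneg a)), abs_nonneg a]
  rw [primitiveRe, sq_abs, sub_self, zero_mul, zero_sub, neg_div]
  have : 0 < a ^ 2 * tanh y / ((a ^ 2 + a ^ 2) * (a ^ 2 * tanh y ^ 2 + a ^ 2)) := by positivity
  linarith [div_nonneg harctan (sq_nonneg (a ^ 2 + a ^ 2))]

theorem exists_pos_primitiveRe_div_eq_one {a b : ℝ} (ha : a ≠ 0) (hb : 0 < b)
    (hab : a ^ 2 < 1 - (b * tanh b)⁻¹) : ∃ ν, 0 < ν ∧ primitiveRe a ν b / b = 1 := by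
  have hT := (tanh_pos hb).ne'
  have hzero : 1 < primitiveRe a 0 b / b := by
    have : primitiveRe a 0 b / b = (1 - (b * tanh b)⁻¹) / a ^ 2 := by
      rw [primitiveRe_zero ha hT]
      field_simp
    rw [this]
    exact (one_lt_div (by positivity)).2 hab
  have habs : primitiveRe a |a| b / b < 1 :=
    (div_neg_of_neg_of_pos (primitiveRe_abs_neg ha hb) hb).trans one_pos
  obtain ⟨ν, hν, hν1⟩ := intermediate_value_Icc' (abs_nonneg a)
    ((continuous_primitiveRe ha hT).div_const b).continuousOn ⟨habs.le, hzero.le⟩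
  refine ⟨ν, hν.1.lt_of_ne ?_, hν1⟩
  rintro rfl
  exact hzero.ne' hν1

section Eigenvector

variable {α : Type*} [MeasurableSpace α] {μ : Measure α}

theorem norm_inv_sub_ofReal_le {c : ℂ} (hc : c.im ≠ 0) (r : ℝ) : ‖(c - r)⁻¹‖ ≤ |c.im|⁻¹ := by
  rw [norm_inv]
  refine inv_anti₀ (abs_pos.2 hc) ?_
  simpa using Complex.abs_im_le_norm (c - r)

theorem memLp_inv_sub_ofReal [IsFiniteMeasure μ] {c : ℂ} (hc : c.im ≠ 0) {u : α → ℝ}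
    (hu : Measurable u) (p : ENNReal) : MemLp (fun x => (c - u x)⁻¹) p μ :=
  MemLp.of_bound (by fun_prop) _ (ae_of_all _ fun x => norm_inv_sub_ofReal_le hc (u x))

theorem exists_eigenvector_of_integral_eq_one [IsFiniteMeasure μ] {u H : α → ℝ}
    (hu : Measurable u) (hH : MemLp H ⊤ μ) {g c : ℂ} (hc : c.im ≠ 0)
    (A : Lp ℂ 2 μ × Lp ℂ 2 μ → Lp ℂ 2 μ × Lp ℂ 2 μ)
    (hA : ∀ φ : Lp ℂ 2 μ × Lp ℂ 2 μ,
      ((A φ).1 : α → ℂ) =ᵐ[μ]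
        (fun x => (u x : ℂ) * (φ.1 : α → ℂ) x + (H x : ℂ) * (φ.2 : α → ℂ) x) ∧
      ((A φ).2 : α → ℂ) =ᵐ[μ]
        (fun x => g * (∫ y, (φ.1 : α → ℂ) y ∂μ) + (u x : ℂ) * (φ.2 : α → ℂ) x))
    (hdisp : ∫ x, g * (H x : ℂ) / (c - u x) ^ 2 ∂μ = 1) :
    ∃ φ : Lp ℂ 2 μ × Lp ℂ 2 μ, φ ≠ 0 ∧ A φ = c • φ := by
  set w : α → ℂ := fun x => (c - u x)⁻¹
  have hw : ∀ p, MemLp w p μ := memLp_inv_sub_ofReal hc hu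
  have hHw : MemLp (fun x => (H x : ℂ) * (w x * w x)) 2 μ :=
    ((hw 2).mul' (r := 2) (hw ⊤)).mul' hH.ofReal
  set φ₁ := hHw.toLp _
  set φ₂ := (hw 2).toLp w
  have hφ₁ : (φ₁ : α → ℂ) =ᵐ[μ] fun x => (H x : ℂ) * (w x * w x) := hHw.coeFn_toLp
  have hφ₂ : (φ₂ : α → ℂ) =ᵐ[μ] w := (hw 2).coeFn_toLp
  have hne : ∀ x, c - u x ≠ 0 := fun x h => hc (by simpa using congrArg Complex.im h)
  have hint : g * ∫ x, (φ₁ : α → ℂ) x ∂μ = 1 := by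
    rw [← integral_const_mul, ← hdisp]
    refine integral_congr_ae (hφ₁.mono fun x hx => ?_)
    simp only [hx, w, div_eq_mul_inv, sq, mul_inv, mul_assoc]
  refine ⟨(φ₁, φ₂), fun h => ?_, Prod.ext (Lp.ext ?_) (Lp.ext ?_)⟩
  · have : ∫ x, (φ₁ : α → ℂ) x ∂μ = 0 := by
      rw [show φ₁ = 0 from congrArg Prod.fst h, integral_congr_ae (Lp.coeFn_zero ℂ 2 μ)]
      simp
    simp [this] at hint
  · filter_upwards [(hA (φ₁, φ₂)).1, Lp.coeFn_smul c φ₁, hφ₁, hφ₂] with x hA₁ hcφ hx₁ hx₂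
    rw [hA₁, Prod.smul_fst, hcφ, Pi.smul_apply, hx₁, hx₂, smul_eq_mul]
    simp only [w]
    field_simp [hne x]
    ring
  · filter_upwards [(hA (φ₁, φ₂)).2, Lp.coeFn_smul c φ₂, hφ₂] with x hA₂ hcφ hx₂
    rw [hA₂, Prod.smul_snd, hcφ, Pi.smul_apply, hint, hx₂, smul_eq_mul]
    simp only [w]
    field_simp [hne x]
    ring

theorem integral_mul_div_conj_sub_sq (μ : Measure α) (u H : α → ℝ) (g : ℝ) (c : ℂ) :
    ∫ x, (g : ℂ) * (H x : ℂ) / (starRingEnd ℂ c - u x) ^ 2 ∂μ =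
      starRingEnd ℂ (∫ x, (g : ℂ) * (H x : ℂ) / (c - u x) ^ 2 ∂μ) := by
  rw [← integral_conj]
  simp [map_div₀]

end Eigenvector

theorem stmt11_general (g a b : ℝ) (hg : 0 < g) (ha : a ≠ 0) (hb : 0 < b)
    (ha1 : |a| < Real.sqrt (1 - (b * Real.tanh b)⁻¹))
    (A : (Lp ℂ 2 μ01 × Lp ℂ 2 μ01) →L[ℂ] (Lp ℂ 2 μ01 × Lp ℂ 2 μ01))
    (hA : ∀ φ : Lp ℂ 2 μ01 × Lp ℂ 2 μ01,
      ((A φ).1 : ℝ → ℂ) =ᵐ[μ01]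
        (fun x => ((a * Real.tanh (b * (2 * x - 1)) : ℝ) : ℂ) * (φ.1 : ℝ → ℂ) x +
          ((g⁻¹ : ℝ) : ℂ) * (φ.2 : ℝ → ℂ) x) ∧
      ((A φ).2 : ℝ → ℂ) =ᵐ[μ01]
        (fun x => (g : ℂ) * (∫ y, (φ.1 : ℝ → ℂ) y ∂μ01) +
          ((a * Real.tanh (b * (2 * x - 1)) : ℝ) : ℂ) * (φ.2 : ℝ → ℂ) x)) :
    ∃ ν : ℝ, 0 < ν ∧
      (∫ x, (g : ℂ) * ((g⁻¹ : ℝ) : ℂ) /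
        (Complex.I * (ν : ℂ) - ((a * Real.tanh (b * (2 * x - 1)) : ℝ) : ℂ)) ^ 2 ∂μ01 = 1) ∧
      (∃ φ : Lp ℂ 2 μ01 × Lp ℂ 2 μ01, φ ≠ 0 ∧ A φ = (Complex.I * (ν : ℂ)) • φ) ∧
      (∃ ψ : Lp ℂ 2 μ01 × Lp ℂ 2 μ01, ψ ≠ 0 ∧ A ψ = (-(Complex.I * (ν : ℂ))) • ψ) := by
  have hab : a ^ 2 < 1 - (b * tanh b)⁻¹ := by
    rwa [← sq_abs, ← Real.lt_sqrt (abs_nonneg a)]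
  obtain ⟨ν, hν, hν1⟩ := exists_pos_primitiveRe_div_eq_one ha hb hab
  have hdisp : ∫ x, (g : ℂ) * ((g⁻¹ : ℝ) : ℂ) /
      (Complex.I * (ν : ℂ) - ((a * tanh (b * (2 * x - 1)) : ℝ) : ℂ)) ^ 2 ∂μ01 = 1 := by
    have hg' : (g : ℂ) ≠ 0 := by exact_mod_cast hg.ne'
    simp_rw [Complex.ofReal_inv, mul_inv_cancel₀ hg', one_div]
    rw [integral_inv_sq_I_mul_sub_tanh_profile a hν.ne' hb.ne', hν1, Complex.ofReal_one]
  have hdisp' := integral_mul_div_conj_sub_sq μ01 (fun x => a * tanh (b * (2 * x - 1)))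
    (fun _ => g⁻¹) g (Complex.I * ν)
  simp only [map_mul, Complex.conj_I, Complex.conj_ofReal, neg_mul, hdisp, map_one] at hdisp'
  have hu : Measurable fun x : ℝ => a * tanh (b * (2 * x - 1)) := by fun_prop
  have hH : MemLp (fun _ : ℝ => g⁻¹) ⊤ μ01 := memLp_top_const _
  refine ⟨ν, hν, hdisp, ?_, ?_⟩
  · exact exists_eigenvector_of_integral_eq_one hu hH (by simpa using hν.ne') A hA hdisp
  · exact exists_eigenvector_of_integral_eq_one hu hH (by simpa using hν.ne') A hA hdisp'

/-- For `H = g⁻¹` and `ũ(λ) = a·tanh(b(2λ-1))` with `b·tanh b > 1` and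
`0 < |a| < √(1 - (b·tanh b)⁻¹)`, there exists `ν > 0` with
`∫₀¹ gH/(iν - ũ)² dλ = 1`; consequently `A₀` has the two complex-conjugate eigenvalues
`±iν`, which have zero real part and nonzero imaginary part. -/
theorem stmt11 (g a b : ℝ) (hg : 0 < g) (ha : a ≠ 0) (hb : 0 < b)
    (hb1 : 1 < b * Real.tanh b)
    (ha1 : |a| < Real.sqrt (1 - (b * Real.tanh b)⁻¹))
    (A : (Lp ℂ 2 μ01 × Lp ℂ 2 μ01) →L[ℂ] (Lp ℂ 2 μ01 × Lp ℂ 2 μ01))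
    (hA : ∀ φ : Lp ℂ 2 μ01 × Lp ℂ 2 μ01,
      ((A φ).1 : ℝ → ℂ) =ᵐ[μ01]
        (fun x => ((a * Real.tanh (b * (2 * x - 1)) : ℝ) : ℂ) * (φ.1 : ℝ → ℂ) x +
          ((g⁻¹ : ℝ) : ℂ) * (φ.2 : ℝ → ℂ) x) ∧
      ((A φ).2 : ℝ → ℂ) =ᵐ[μ01]
        (fun x => (g : ℂ) * (∫ y, (φ.1 : ℝ → ℂ) y ∂μ01) +
          ((a * Real.tanh (b * (2 * x - 1)) : ℝ) : ℂ) * (φ.2 : ℝ → ℂ) x)) :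
    ∃ ν : ℝ, 0 < ν ∧
      (∫ x, (g : ℂ) * ((g⁻¹ : ℝ) : ℂ) /
        (Complex.I * (ν : ℂ) - ((a * Real.tanh (b * (2 * x - 1)) : ℝ) : ℂ)) ^ 2 ∂μ01 = 1) ∧
      (∃ φ : Lp ℂ 2 μ01 × Lp ℂ 2 μ01, φ ≠ 0 ∧ A φ = (Complex.I * (ν : ℂ)) • φ) ∧
      (∃ ψ : Lp ℂ 2 μ01 × Lp ℂ 2 μ01, ψ ≠ 0 ∧ A ψ = (-(Complex.I * (ν : ℂ))) • ψ) :=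
  stmt11_general g a b hg ha hb ha1 A hA
end

section
/- Let g > 0. Let H, ũ : ℝ × ℝ × [0,1] → ℝ be C¹ functions satisfying, for all (t,x,λ) ∈ ℝ × ℝ × (0,1), the flat-bottom system ∂_t H + ∂_x(H ũ) = 0 and ∂_t ũ + ũ ∂_x ũ + g ∂_x ∫₀¹ H(t,x,λ') dλ' = 0. Let c : ℝ × ℝ → ℝ be a C¹ function such that inf_{λ ∈ [0,1]} |c(t,x) − ũ(t,x,λ)| > 0 for all (t,x) and ∫₀¹ g H(t,x,λ)/(c(t,x) − ũ(t,x,λ))² dλ = 1 for all (t,x). Then the function r(t,x) = c(t,x) − g ∫₀¹ H(t,x,λ)/(ũ(t,x,λ) − c(t,x)) dλ satisfies ∂_t r + c ∂_x r = 0 for all (t,x) ∈ ℝ × ℝ. -/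
/-!
Write `D = ∂ₜ + c ∂ₓ` and `P = ∫₀¹ H dλ`. The mass equation gives `D H = -(ũ - c) ∂ₓH - H ∂ₓũ` and
the momentum equation `D ũ = -(ũ - c) ∂ₓũ - g ∂ₓP`, so in `D (H / (ũ - c))` the `∂ₓũ` terms
cancel and `D (H / (ũ - c)) = -∂ₓH + (g ∂ₓP + D c) H / (ũ - c)²`. Integrating in `λ` and using
`∫₀¹ g H / (c - ũ)² dλ = 1` gives `g ∫₀¹ D (H / (ũ - c)) dλ = D c`, i.e. `D r = 0`. Differentiation
under the integral sign is legitimate because `c` stays away from `ũ`, so all integrands are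
continuous on `ℝ × ℝ × [0, 1]`.
-/

open MeasureTheory Set Function
open scoped Interval

theorem intervalIntegral.hasDerivAt_integral_of_continuousOn {f : ℝ → ℝ → ℝ} {a b t : ℝ}
    (hf : ContinuousOn (uncurry f) (univ ×ˢ [[a, b]]))
    (hf' : ContinuousOn (fun p : ℝ × ℝ => deriv (f · p.2) p.1) (univ ×ˢ [[a, b]]))
    (hdiff : ∀ s, ∀ l ∈ [[a, b]], DifferentiableAt ℝ (f · l) s) :
    HasDerivAt (fun s => ∫ l in a..b, f s l) (∫ l in a..b, deriv (f · l) t) t := by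
  obtain ⟨C, hC⟩ := ((isCompact_closedBall t 1).prod isCompact_uIcc).exists_bound_of_continuousOn
    (hf'.mono (prod_mono (subset_univ _) le_rfl))
  have slice {φ : ℝ → ℝ → ℝ} (hφ : ContinuousOn (uncurry φ) (univ ×ˢ [[a, b]])) (s : ℝ) :
      ContinuousOn (φ s) [[a, b]] :=
    hφ.comp (Continuous.prodMk_right s).continuousOn fun l hl => ⟨mem_univ s, hl⟩
  refine (intervalIntegral.hasDerivAt_integral_of_dominated_loc_of_deriv_le (μ := volume)
    (F' := fun s l => deriv (f · l) s) (bound := fun _ => C)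
    (Metric.ball_mem_nhds t one_pos) (Filter.Eventually.of_forall fun s => ?_)
    (slice hf t).intervalIntegrable ?_ ?_ intervalIntegrable_const ?_).2
  · exact ((slice hf s).mono uIoc_subset_uIcc).aestronglyMeasurable measurableSet_uIoc
  · exact ((slice (φ := fun s l => deriv (f · l) s) hf' t).mono
      uIoc_subset_uIcc).aestronglyMeasurable measurableSet_uIoc
  · exact Filter.Eventually.of_forall fun l hl s hs =>
      hC (s, l) ⟨Metric.ball_subset_closedBall hs, uIoc_subset_uIcc hl⟩
  · exact Filter.Eventually.of_forall fun l hl s _ => (hdiff s l (uIoc_subset_uIcc hl)).hasDerivAt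

section Partials

variable {f : ℝ → ℝ → ℝ → ℝ} {U : Set (ℝ × ℝ × ℝ)} {a b t x l : ℝ}

theorem DifferentiableAt.hasDerivAt_fst (hf : DifferentiableAt ℝ ↿f (t, x, l)) :
    HasDerivAt (fun s => f s x l) (fderiv ℝ ↿f (t, x, l) (1, 0, 0)) t := by
  exact hf.hasFDerivAt.comp_hasDerivAt t
    ((hasDerivAt_id t).prodMk ((hasDerivAt_const t x).prodMk (hasDerivAt_const t l)))

theorem DifferentiableAt.hasDerivAt_snd (hf : DifferentiableAt ℝ ↿f (t, x, l)) :
    HasDerivAt (fun y => f t y l) (fderiv ℝ ↿f (t, x, l) (0, 1, 0)) x := by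
  exact hf.hasFDerivAt.comp_hasDerivAt x
    ((hasDerivAt_const x t).prodMk ((hasDerivAt_id x).prodMk (hasDerivAt_const x l)))

theorem ContDiffOn.continuousOn_deriv_fst (hf : ContDiffOn ℝ 1 ↿f U) (hU : IsOpen U) :
    ContinuousOn (fun p : ℝ × ℝ × ℝ => deriv (fun s => f s p.2.1 p.2.2) p.1) U :=
  ((hf.continuousOn_fderiv_of_isOpen hU le_rfl).clm_apply continuousOn_const).congr fun _ hp =>
    ((hf.differentiableOn one_ne_zero).differentiableAt (hU.mem_nhds hp)).hasDerivAt_fst.deriv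

theorem ContDiffOn.continuousOn_deriv_snd (hf : ContDiffOn ℝ 1 ↿f U) (hU : IsOpen U) :
    ContinuousOn (fun p : ℝ × ℝ × ℝ => deriv (fun y => f p.1 y p.2.2) p.2.1) U :=
  ((hf.continuousOn_fderiv_of_isOpen hU le_rfl).clm_apply continuousOn_const).congr fun _ hp =>
    ((hf.differentiableOn one_ne_zero).differentiableAt (hU.mem_nhds hp)).hasDerivAt_snd.deriv

theorem ContinuousOn.intervalIntegrable_slice {φ : ℝ × ℝ × ℝ → ℝ} (hφ : ContinuousOn φ U)
    (hU : ∀ l ∈ [[a, b]], (t, x, l) ∈ U) :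
    IntervalIntegrable (fun l => φ (t, x, l)) volume a b :=
  (hφ.comp (by fun_prop : Continuous fun l : ℝ => (t, x, l)).continuousOn hU).intervalIntegrable

theorem hasDerivAt_intervalIntegral_fst (hf : ContDiffOn ℝ 1 ↿f U) (hU : IsOpen U)
    (hab : ∀ t x, ∀ l ∈ [[a, b]], (t, x, l) ∈ U) (t x : ℝ) :
    HasDerivAt (fun s => ∫ l in a..b, f s x l) (∫ l in a..b, deriv (fun s => f s x l) t) t := by
  have hemb : Continuous fun p : ℝ × ℝ => (p.1, x, p.2) := by fun_prop
  have hmaps : MapsTo (fun p : ℝ × ℝ => (p.1, x, p.2)) (univ ×ˢ [[a, b]]) U :=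
    fun p hp => hab p.1 x p.2 hp.2
  exact intervalIntegral.hasDerivAt_integral_of_continuousOn
    (hf.continuousOn.comp hemb.continuousOn hmaps)
    ((hf.continuousOn_deriv_fst hU).comp hemb.continuousOn hmaps)
    fun s l hl => ((hf.differentiableOn one_ne_zero).differentiableAt
      (hU.mem_nhds (hab s x l hl))).hasDerivAt_fst.differentiableAt

theorem hasDerivAt_intervalIntegral_snd (hf : ContDiffOn ℝ 1 ↿f U) (hU : IsOpen U)
    (hab : ∀ t x, ∀ l ∈ [[a, b]], (t, x, l) ∈ U) (t x : ℝ) :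
    HasDerivAt (fun y => ∫ l in a..b, f t y l) (∫ l in a..b, deriv (fun y => f t y l) x) x := by
  have hemb : Continuous fun p : ℝ × ℝ => (t, p.1, p.2) := by fun_prop
  have hmaps : MapsTo (fun p : ℝ × ℝ => (t, p.1, p.2)) (univ ×ˢ [[a, b]]) U :=
    fun p hp => hab t p.1 p.2 hp.2
  exact intervalIntegral.hasDerivAt_integral_of_continuousOn
    (hf.continuousOn.comp hemb.continuousOn hmaps)
    ((hf.continuousOn_deriv_snd hU).comp hemb.continuousOn hmaps)
    fun y l hl => ((hf.differentiableOn one_ne_zero).differentiableAt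
      (hU.mem_nhds (hab t y l hl))).hasDerivAt_snd.differentiableAt

theorem Differentiable.differentiable_curry_fst {c : ℝ → ℝ → ℝ} (hc : Differentiable ℝ ↿c)
    (x : ℝ) : Differentiable ℝ fun s => c s x :=
  hc.comp (differentiable_id.prodMk (differentiable_const x))

theorem Differentiable.differentiable_curry_snd {c : ℝ → ℝ → ℝ} (hc : Differentiable ℝ ↿c)
    (t : ℝ) : Differentiable ℝ fun y => c t y :=
  hc.comp ((differentiable_const t).prodMk differentiable_id)

end Partials

theorem material_deriv_quotient_identity {g H u c Ht Hx ut ux ct cx P : ℝ}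
    (hg : g ≠ 0) (hd : u - c ≠ 0)
    (hmass : Ht + (Hx * u + H * ux) = 0) (hmom : ut + u * ux + g * P = 0) :
    (Ht * (u - c) - H * (ut - ct)) / (u - c) ^ 2
        + c * ((Hx * (u - c) - H * (ux - cx)) / (u - c) ^ 2)
      = (P + (ct + c * cx) / g) * (g * H / (c - u) ^ 2) - Hx := by
  have hd' : c - u ≠ 0 := sub_ne_zero.2 (sub_ne_zero.1 hd).symm
  obtain rfl : Ht = -(Hx * u + H * ux) := by linarith
  obtain rfl : ut = -(u * ux) - g * P := by linarith
  field_simp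
  ring

section FlatBottom

variable {g : ℝ} {H u : ℝ → ℝ → ℝ → ℝ} {c : ℝ → ℝ → ℝ}

def nonCriticalSet (u : ℝ → ℝ → ℝ → ℝ) (c : ℝ → ℝ → ℝ) : Set (ℝ × ℝ × ℝ) :=
  {p | u p.1 p.2.1 p.2.2 - c p.1 p.2.1 ≠ 0}

theorem contDiff_comp_fst_fst (hc : ContDiff ℝ 1 ↿c) :
    ContDiff ℝ 1 fun p : ℝ × ℝ × ℝ => c p.1 p.2.1 :=
  hc.comp (contDiff_fst.prodMk (contDiff_fst.comp contDiff_snd))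

theorem isOpen_nonCriticalSet (hu : Continuous ↿u) (hc : Continuous ↿c) :
    IsOpen (nonCriticalSet u c) :=
  isOpen_ne_fun (hu.sub (hc.comp (continuous_fst.prodMk (continuous_fst.comp continuous_snd))))
    continuous_const

theorem contDiffOn_div_sub (hH : ContDiff ℝ 1 ↿H) (hu : ContDiff ℝ 1 ↿u) (hc : ContDiff ℝ 1 ↿c) :
    ContDiffOn ℝ 1 ↿(fun t x l => H t x l / (u t x l - c t x)) (nonCriticalSet u c) :=
  hH.contDiffOn.div (hu.contDiffOn.sub (contDiff_comp_fst_fst hc).contDiffOn) fun _ hp => hp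

theorem material_deriv_div_sub_eq (hg : g ≠ 0) (hH : ContDiff ℝ 1 ↿H) (hu : ContDiff ℝ 1 ↿u)
    (hc : ContDiff ℝ 1 ↿c) {t x l P : ℝ} (hd : u t x l - c t x ≠ 0)
    (hmass : deriv (fun s => H s x l) t + deriv (fun y => H t y l * u t y l) x = 0)
    (hmom : deriv (fun s => u s x l) t + u t x l * deriv (fun y => u t y l) x + g * P = 0) :
    deriv (fun s => H s x l / (u s x l - c s x)) t
        + c t x * deriv (fun y => H t y l / (u t y l - c t y)) x
      = (P + (deriv (fun s => c s x) t + c t x * deriv (fun y => c t y) x) / g)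
          * (g * H t x l / (c t x - u t x l) ^ 2) - deriv (fun y => H t y l) x := by
  have dH := hH.differentiable one_ne_zero (t, x, l)
  have du := hu.differentiable one_ne_zero (t, x, l)
  have dc : Differentiable ℝ ↿c := hc.differentiable one_ne_zero
  have hHt := dH.hasDerivAt_fst.differentiableAt.hasDerivAt
  have hHx := dH.hasDerivAt_snd.differentiableAt.hasDerivAt
  have hut := du.hasDerivAt_fst.differentiableAt.hasDerivAt
  have hux := du.hasDerivAt_snd.differentiableAt.hasDerivAt
  have hct := (dc.differentiable_curry_fst x t).hasDerivAt
  have hcx := (dc.differentiable_curry_snd t x).hasDerivAt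
  rw [(hHx.fun_mul hux).deriv] at hmass
  rw [(hHt.fun_div (hut.fun_sub hct) hd).deriv, (hHx.fun_div (hux.fun_sub hcx) hd).deriv]
  exact material_deriv_quotient_identity hg hd hmass hmom

theorem integral_material_deriv_div_sub_eq (hg : g ≠ 0) (hH : ContDiff ℝ 1 ↿H)
    (hu : ContDiff ℝ 1 ↿u) (hc : ContDiff ℝ 1 ↿c)
    (hS : ∀ t x, ∀ l ∈ [[(0 : ℝ), 1]], (t, x, l) ∈ nonCriticalSet u c) {t x : ℝ}
    (hmass : ∀ l ∈ Ioo (0 : ℝ) 1,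
      deriv (fun s => H s x l) t + deriv (fun y => H t y l * u t y l) x = 0)
    (hmom : ∀ l ∈ Ioo (0 : ℝ) 1,
      deriv (fun s => u s x l) t + u t x l * deriv (fun y => u t y l) x
        + g * deriv (fun y => ∫ m in (0 : ℝ)..1, H t y m) x = 0)
    (hint : ∫ l in (0 : ℝ)..1, g * H t x l / (c t x - u t x l) ^ 2 = 1) :
    (∫ l in (0 : ℝ)..1, deriv (fun s => H s x l / (u s x l - c s x)) t)
        + c t x * ∫ l in (0 : ℝ)..1, deriv (fun y => H t y l / (u t y l - c t y)) x
      = (deriv (fun s => c s x) t + c t x * deriv (fun y => c t y) x) / g := by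
  have hSo := isOpen_nonCriticalSet hu.continuous hc.continuous
  have hG := contDiffOn_div_sub hH hu hc
  have hw : ContinuousOn (fun p : ℝ × ℝ × ℝ =>
      g * H p.1 p.2.1 p.2.2 / (c p.1 p.2.1 - u p.1 p.2.1 p.2.2) ^ 2) (nonCriticalSet u c) :=
    (continuous_const.mul hH.continuous).continuousOn.div
      (((contDiff_comp_fst_fst hc).continuous.sub hu.continuous).pow 2).continuousOn
      fun _ hp => pow_ne_zero 2 (sub_ne_zero.2 (Ne.symm (sub_ne_zero.1 hp)))
  have hP := hasDerivAt_intervalIntegral_snd (a := 0) (b := 1) hH.contDiffOn isOpen_univ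
    (fun _ _ _ _ => mem_univ _) t x
  have iGt := (hG.continuousOn_deriv_fst hSo).intervalIntegrable_slice (hS t x)
  have iGx := (hG.continuousOn_deriv_snd hSo).intervalIntegrable_slice (hS t x)
  have iHx := (hH.contDiffOn.continuousOn_deriv_snd isOpen_univ).intervalIntegrable_slice
    (a := 0) (b := 1) (t := t) (x := x) fun _ _ => mem_univ _
  have iw := hw.intervalIntegrable_slice (hS t x)
  dsimp only at iGt iGx iHx iw
  set K := deriv (fun y => ∫ m in (0 : ℝ)..1, H t y m) x
    + (deriv (fun s => c s x) t + c t x * deriv (fun y => c t y) x) / g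
  calc _ = ∫ l in (0 : ℝ)..1, (deriv (fun s => H s x l / (u s x l - c s x)) t
          + c t x * deriv (fun y => H t y l / (u t y l - c t y)) x) := by
        rw [intervalIntegral.integral_add iGt (iGx.const_mul _),
          intervalIntegral.integral_const_mul]
    _ = ∫ l in (0 : ℝ)..1,
          (K * (g * H t x l / (c t x - u t x l) ^ 2) - deriv (fun y => H t y l) x) :=
        intervalIntegral.integral_congr_Ioo_of_le zero_le_one fun l hl =>
          material_deriv_div_sub_eq hg hH hu hc (hS t x l (Ioo_subset_Icc_self.trans
            Icc_subset_uIcc hl)) (hmass l hl) (hmom l hl)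
    _ = K * 1 - deriv (fun y => ∫ m in (0 : ℝ)..1, H t y m) x := by
        rw [intervalIntegral.integral_sub (iw.const_mul _) iHx, intervalIntegral.integral_const_mul,
          hint, hP.deriv]
    _ = _ := by ring

end FlatBottom

/-- Generalized Riemann invariants for the flat-bottom one-dimensional
semi-Lagrangian system: if `(H, ũ)` solves the system, `c(t,x)` stays away from the range
of `ũ(t,x,·)` and satisfies `∫₀¹ gH/(c-ũ)² dλ = 1`, then
`r = c - g∫₀¹ H/(ũ-c) dλ` satisfies `∂ₜr + c ∂ₓr = 0`. -/
theorem stmt12 (g : ℝ) (hg : 0 < g)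
    (H u : ℝ → ℝ → ℝ → ℝ)
    (hH : ContDiff ℝ 1 (fun p : ℝ × ℝ × ℝ => H p.1 p.2.1 p.2.2))
    (hu : ContDiff ℝ 1 (fun p : ℝ × ℝ × ℝ => u p.1 p.2.1 p.2.2))
    (heq1 : ∀ t x : ℝ, ∀ l ∈ Set.Ioo (0:ℝ) 1,
      deriv (fun s => H s x l) t + deriv (fun y => H t y l * u t y l) x = 0)
    (heq2 : ∀ t x : ℝ, ∀ l ∈ Set.Ioo (0:ℝ) 1,
      deriv (fun s => u s x l) t + u t x l * deriv (fun y => u t y l) x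
        + g * deriv (fun y => ∫ m in (0:ℝ)..1, H t y m) x = 0)
    (c : ℝ → ℝ → ℝ)
    (hc : ContDiff ℝ 1 (fun p : ℝ × ℝ => c p.1 p.2))
    (hsep : ∀ t x : ℝ, ∃ δ : ℝ, 0 < δ ∧ ∀ l ∈ Set.Icc (0:ℝ) 1, δ ≤ |c t x - u t x l|)
    (hint : ∀ t x : ℝ,
      ∫ l in (0:ℝ)..1, g * H t x l / (c t x - u t x l) ^ 2 = 1) :
    ∀ t x : ℝ,
      deriv (fun s => c s x - g * ∫ l in (0:ℝ)..1, H s x l / (u s x l - c s x)) t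
        + c t x *
          deriv (fun y => c t y - g * ∫ l in (0:ℝ)..1, H t y l / (u t y l - c t y)) x
        = 0 := by
  intro t x
  have hS : ∀ t x, ∀ l ∈ [[(0 : ℝ), 1]], (t, x, l) ∈ nonCriticalSet u c := by
    rw [uIcc_of_le zero_le_one]
    intro t x l hl hcrit
    obtain ⟨δ, hδ, hδle⟩ := hsep t x
    have := hδle l hl
    rw [← neg_sub, hcrit, neg_zero, abs_zero] at this
    linarith
  have hSo := isOpen_nonCriticalSet hu.continuous hc.continuous
  have hG := contDiffOn_div_sub hH hu hc
  have dc : Differentiable ℝ ↿c := hc.differentiable one_ne_zero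
  rw [((dc.differentiable_curry_fst x t).hasDerivAt.fun_sub
      ((hasDerivAt_intervalIntegral_fst hG hSo hS t x).const_mul g)).deriv,
    ((dc.differentiable_curry_snd t x).hasDerivAt.fun_sub
      ((hasDerivAt_intervalIntegral_snd hG hSo hS t x).const_mul g)).deriv]
  have key := integral_material_deriv_div_sub_eq hg.ne' hH hu hc hS (heq1 t x) (heq2 t x) (hint t x)
  field_simp at key
  linear_combination -key
end

section
/- Let N ≥ 1, g > 0, γ₁,…,γ_N > 0, H₁,…,H_N > 0 and ũ₁,…,ũ_N ∈ ℝ, and let A_N be the 2N×2N real matrix with block form A_N = [[diag(ũ), diag(H)], [g·𝟙⊗γ, diag(ũ)]] where (𝟙⊗γ)_{ij} = γ_j. Then the set of complex eigenvalues of A_N equals { c ∈ ℂ \ {ũ₁,…,ũ_N} : Σ_{i=1}^N g γ_i H_i/(ũ_i − c)² = 1 } ∪ { c ∈ {ũ₁,…,ũ_N} : #{ j : ũ_j = c } > 1 }. In particular, if the ũ_i are pairwise distinct, the eigenvalues of A_N are exactly the complex solutions c ∉ {ũ₁,…,ũ_N} of Σ_{i=1}^N g γ_i H_i/(ũ_i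 − c)² = 1. -/
open Matrix

/-- The `2N × 2N` block matrix `A_N = [[diag ũ, diag H], [g·𝟙⊗γ, diag ũ]]` of the
multilayer semi-Lagrangian system. -/
noncomputable def multilayerMatrix (N : ℕ) (g : ℝ) (γ H u : Fin N → ℝ) :
    Matrix (Fin N ⊕ Fin N) (Fin N ⊕ Fin N) ℝ :=
  Matrix.fromBlocks (Matrix.diagonal u) (Matrix.diagonal H)
    (Matrix.of fun _ j => g * γ j) (Matrix.diagonal u)

lemma stmt15_mem_spec {n : Type*} [Fintype n] [DecidableEq n] (M : Matrix n n ℂ) (c : ℂ) :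
    c ∈ spectrum ℂ M ↔ ∃ v, v ≠ 0 ∧ M.mulVec v = c • v := by
  rw [spectrum.mem_iff, Matrix.isUnit_iff_isUnit_det, isUnit_iff_ne_zero, not_not,
    ← Matrix.exists_mulVec_eq_zero_iff]
  have key : ∀ v : n → ℂ, (algebraMap ℂ (Matrix n n ℂ) c - M).mulVec v = c • v - M.mulVec v := by
    intro v
    rw [Matrix.sub_mulVec, Algebra.algebraMap_eq_smul_one, Matrix.smul_mulVec,
      Matrix.one_mulVec]
  constructor
  · rintro ⟨v, hv, h⟩
    exact ⟨v, hv, by rw [key, sub_eq_zero] at h; exact h.symm⟩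
  · rintro ⟨v, hv, h⟩
    exact ⟨v, hv, by rw [key, sub_eq_zero]; exact h.symm⟩

lemma stmt15_mulVec_iff (N : ℕ) (g : ℝ) (γ H u : Fin N → ℝ) (c : ℂ) (v : Fin N ⊕ Fin N → ℂ) :
    ((multilayerMatrix N g γ H u).map (fun x : ℝ => (x : ℂ))).mulVec v = c • v ↔
      ((∀ i, (u i : ℂ) * v (Sum.inl i) + (H i : ℂ) * v (Sum.inr i) = c * v (Sum.inl i)) ∧
       (∀ i, (g : ℂ) * ∑ j, (γ j : ℂ) * v (Sum.inl j) + (u i : ℂ) * v (Sum.inr i)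
          = c * v (Sum.inr i))) := by
  have hsimp : ∀ k, (((multilayerMatrix N g γ H u).map (fun x : ℝ => (x : ℂ))).mulVec v) k =
      Sum.elim (fun i => (u i : ℂ) * v (Sum.inl i) + (H i : ℂ) * v (Sum.inr i))
        (fun i => (g : ℂ) * ∑ j, (γ j : ℂ) * v (Sum.inl j) + (u i : ℂ) * v (Sum.inr i)) k := by
    rintro (i | i) <;>
      simp [multilayerMatrix, Matrix.mulVec, dotProduct, Fintype.sum_sum_type,
        Matrix.diagonal, Matrix.fromBlocks, apply_ite ((↑) : ℝ → ℂ), ite_mul,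
        Finset.sum_ite_eq, Finset.mul_sum, mul_assoc]
  constructor
  · intro h
    exact ⟨fun i => ((hsimp (Sum.inl i)).symm.trans (congrFun h (Sum.inl i))),
           fun i => ((hsimp (Sum.inr i)).symm.trans (congrFun h (Sum.inr i)))⟩
  · rintro ⟨h1, h2⟩
    funext k
    rw [hsimp k]
    rcases k with i | i
    · exact h1 i
    · exact h2 i

lemma stmt15_key (N : ℕ) (hN : 1 ≤ N) (g : ℝ) (hg : 0 < g)
    (γ H u : Fin N → ℝ) (hγ : ∀ i, 0 < γ i) (hH : ∀ i, 0 < H i) (c : ℂ) :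
    c ∈ spectrum ℂ ((multilayerMatrix N g γ H u).map (fun x : ℝ => (x : ℂ))) ↔
      ((∀ i, (u i : ℂ) ≠ c) ∧
        ∑ i, (g : ℂ) * (γ i : ℂ) * (H i : ℂ) / ((u i : ℂ) - c) ^ 2 = 1) ∨
      ((∃ i, (u i : ℂ) = c) ∧
        1 < (Finset.univ.filter (fun j => (u j : ℂ) = c)).card) := by
  have hgC : (g : ℂ) ≠ 0 := Complex.ofReal_ne_zero.mpr hg.ne'
  have hγC : ∀ i, (γ i : ℂ) ≠ 0 := fun i => Complex.ofReal_ne_zero.mpr (hγ i).ne'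
  have hHC : ∀ i, (H i : ℂ) ≠ 0 := fun i => Complex.ofReal_ne_zero.mpr (hH i).ne'
  rw [stmt15_mem_spec]
  constructor
  · rintro ⟨v, hv, hmv⟩
    obtain ⟨hE1, hE2⟩ := (stmt15_mulVec_iff N g γ H u c v).mp hmv
    set s : ℂ := ∑ j, (γ j : ℂ) * v (Sum.inl j) with hs_def
    by_cases hex : ∃ i, (u i : ℂ) = c
    · -- c is one of the u_i; show multiplicity > 1
      right
      refine ⟨hex, ?_⟩
      by_contra hcard
      push_neg at hcard
      obtain ⟨k, hk⟩ := hex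
      have hmem : k ∈ Finset.univ.filter (fun j => (u j : ℂ) = c) := by
        simp [hk]
      have huniq : ∀ j, (u j : ℂ) = c → j = k := by
        intro j hj
        have hjmem : j ∈ Finset.univ.filter (fun j => (u j : ℂ) = c) := by simp [hj]
        exact Finset.card_le_one.mp hcard j hjmem k hmem
      -- v (Sum.inr k) = 0
      have hyk : v (Sum.inr k) = 0 := by
        have := hE1 k
        rw [hk] at this
        have h2 : (H k : ℂ) * v (Sum.inr k) = 0 := by linear_combination this
        exact (mul_eq_zero.mp h2).resolve_left (hHC k)
      -- s = 0
      have hs0 : s = 0 := by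
        have := hE2 k
        rw [hk, hyk] at this
        have h2 : (g : ℂ) * s = 0 := by linear_combination this
        exact (mul_eq_zero.mp h2).resolve_left hgC
      -- off-diagonal entries vanish
      have hy0 : ∀ i, v (Sum.inr i) = 0 := by
        intro i
        by_cases hi : (u i : ℂ) = c
        · rw [huniq i hi]; exact hyk
        · have := hE2 i
          rw [hs0] at this
          have h2 : ((u i : ℂ) - c) * v (Sum.inr i) = 0 := by linear_combination this
          exact (mul_eq_zero.mp h2).resolve_left (sub_ne_zero.mpr hi)
      have hx0 : ∀ i, v (Sum.inl i) = 0 := by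
        intro i
        by_cases hi : (u i : ℂ) = c
        · -- then i = k and γ k * x k = s = 0
          have hik : i = k := huniq i hi
          subst hik
          have : s = (γ i : ℂ) * v (Sum.inl i) := by
            rw [hs_def]
            rw [Finset.sum_eq_single i]
            · intro j _ hj
              by_cases hj' : (u j : ℂ) = c
              · exact absurd (huniq j hj') hj
              · -- v (Sum.inl j) = 0 for u j ≠ c
                have := hE1 j
                rw [hy0 j] at this
                have h2 : ((u j : ℂ) - c) * v (Sum.inl j) = 0 := by linear_combination this
                have := (mul_eq_zero.mp h2).resolve_left (sub_ne_zero.mpr hj')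
                rw [this, mul_zero]
            · intro h; exact absurd (Finset.mem_univ i) h
          rw [hs0] at this
          exact (mul_eq_zero.mp this.symm).resolve_left (hγC i)
        · have := hE1 i
          rw [hy0 i] at this
          have h2 : ((u i : ℂ) - c) * v (Sum.inl i) = 0 := by linear_combination this
          exact (mul_eq_zero.mp h2).resolve_left (sub_ne_zero.mpr hi)
      exact hv (funext fun k => by rcases k with i | i; exacts [hx0 i, hy0 i])
    · -- c is not among the u_i; derive the sum formula
      left
      push_neg at hex
      refine ⟨hex, ?_⟩
      have hd : ∀ i, (u i : ℂ) - c ≠ 0 := fun i => sub_ne_zero.mpr (hex i)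
      have hdy : ∀ i, ((u i : ℂ) - c) * v (Sum.inr i) = -((g : ℂ) * s) := fun i => by
        linear_combination hE2 i
      have hdx : ∀ i, ((u i : ℂ) - c) * v (Sum.inl i) = -((H i : ℂ) * v (Sum.inr i)) := fun i => by
        linear_combination hE1 i
      have hxf : ∀ i, v (Sum.inl i) = (g : ℂ) * s * (H i : ℂ) / ((u i : ℂ) - c) ^ 2 := by
        intro i
        rw [eq_div_iff (pow_ne_zero 2 (hd i))]
        linear_combination ((u i : ℂ) - c) * hdx i - (H i : ℂ) * hdy i
      have hsne : s ≠ 0 := by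
        intro hs0
        apply hv
        have hy0 : ∀ i, v (Sum.inr i) = 0 := fun i => by
          have := hdy i; rw [hs0, mul_zero, neg_zero] at this
          exact (mul_eq_zero.mp this).resolve_left (hd i)
        have hx0 : ∀ i, v (Sum.inl i) = 0 := fun i => by
          have := hdx i; rw [hy0 i, mul_zero, neg_zero] at this
          exact (mul_eq_zero.mp this).resolve_left (hd i)
        exact funext fun k => by rcases k with i | i; exacts [hx0 i, hy0 i]
      have hsum : s = s * ∑ i, (g : ℂ) * (γ i : ℂ) * (H i : ℂ) / ((u i : ℂ) - c) ^ 2 := by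
        calc s = ∑ i, (γ i : ℂ) * v (Sum.inl i) := hs_def
          _ = ∑ i, s * ((g : ℂ) * (γ i : ℂ) * (H i : ℂ) / ((u i : ℂ) - c) ^ 2) := by
              refine Finset.sum_congr rfl fun i _ => ?_
              rw [hxf i]; ring
          _ = s * ∑ i, (g : ℂ) * (γ i : ℂ) * (H i : ℂ) / ((u i : ℂ) - c) ^ 2 := by
              rw [Finset.mul_sum]
      exact mul_left_cancel₀ hsne (by rw [mul_one, ← hsum])
  · rintro (⟨hex, hsum⟩ | ⟨⟨k, hk⟩, hcard⟩)
    · -- eigenvector for the rational-equation case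
      have hd : ∀ i, (u i : ℂ) - c ≠ 0 := fun i => sub_ne_zero.mpr (hex i)
      refine ⟨Sum.elim (fun i => (g : ℂ) * (H i : ℂ) / ((u i : ℂ) - c) ^ 2)
        (fun i => -((g : ℂ) / ((u i : ℂ) - c))), ?_, ?_⟩
      · intro h0
        have := congrFun h0 (Sum.inl ⟨0, hN⟩)
        simp only [Sum.elim_inl, Pi.zero_apply] at this
        exact (div_ne_zero (mul_ne_zero hgC (hHC _)) (pow_ne_zero 2 (hd _))) this
      · rw [stmt15_mulVec_iff]
        constructor
        · intro i
          simp only [Sum.elim_inl, Sum.elim_inr]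
          have hdi := hd i
          field_simp
          ring
        · intro i
          simp only [Sum.elim_inl, Sum.elim_inr]
          have hsum' : ∑ j, (γ j : ℂ) * ((g : ℂ) * (H j : ℂ) / ((u j : ℂ) - c) ^ 2) = 1 := by
            rw [← hsum]
            exact Finset.sum_congr rfl fun j _ => by ring
          rw [hsum']
          have hdi := hd i
          field_simp
          ring
    · -- eigenvector supported on a repeated u value
      obtain ⟨j₁, hj₁, j₂, hj₂, hj12⟩ := Finset.one_lt_card.mp hcard
      simp only [Finset.mem_filter, Finset.mem_univ, true_and] at hj₁ hj₂
      refine ⟨Sum.elim (fun i => (if i = j₁ then (γ j₂ : ℂ) else 0)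
          + (if i = j₂ then -(γ j₁ : ℂ) else 0)) 0, ?_, ?_⟩
      · intro h0
        have := congrFun h0 (Sum.inl j₁)
        simp only [Sum.elim_inl, Pi.zero_apply, if_pos rfl, if_neg hj12, add_zero] at this
        exact hγC j₂ this
      · rw [stmt15_mulVec_iff]
        have hsz : ∑ j, (γ j : ℂ) * ((if j = j₁ then (γ j₂ : ℂ) else 0)
            + (if j = j₂ then -(γ j₁ : ℂ) else 0)) = 0 := by
          simp only [mul_add, Finset.sum_add_distrib, mul_ite, mul_zero, mul_neg,
            Finset.sum_ite_eq', Finset.mem_univ, if_true]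
          ring
        constructor
        · intro i
          simp only [Sum.elim_inl, Sum.elim_inr, Pi.zero_apply, mul_zero, add_zero]
          by_cases h1 : i = j₁
          · subst h1; rw [hj₁]
          · by_cases h2 : i = j₂
            · subst h2; rw [hj₂]
            · simp [h1, h2]
        · intro i
          simp only [Sum.elim_inl, Sum.elim_inr, Pi.zero_apply, mul_zero, add_zero, hsz]

/-- The complex eigenvalues of `A_N` are exactly the `c ∉ {ũ₁,…,ũ_N}`
with `Σ g γᵢ Hᵢ/(ũᵢ - c)² = 1` together with the values `c` attained by more than one
`ũ_j`; in particular, if the `ũᵢ` are pairwise distinct, the eigenvalues are exactly the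
solutions of the rational equation. -/
theorem stmt15 (N : ℕ) (hN : 1 ≤ N) (g : ℝ) (hg : 0 < g)
    (γ H u : Fin N → ℝ) (hγ : ∀ i, 0 < γ i) (hH : ∀ i, 0 < H i) :
    (spectrum ℂ ((multilayerMatrix N g γ H u).map (fun x : ℝ => (x : ℂ))) =
      {c : ℂ | (∀ i, (u i : ℂ) ≠ c) ∧
        ∑ i, (g : ℂ) * (γ i : ℂ) * (H i : ℂ) / ((u i : ℂ) - c) ^ 2 = 1} ∪
      {c : ℂ | (∃ i, (u i : ℂ) = c) ∧
        1 < (Finset.univ.filter (fun j => (u j : ℂ) = c)).card}) ∧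
    (Function.Injective u →
      spectrum ℂ ((multilayerMatrix N g γ H u).map (fun x : ℝ => (x : ℂ))) =
        {c : ℂ | (∀ i, (u i : ℂ) ≠ c) ∧
          ∑ i, (g : ℂ) * (γ i : ℂ) * (H i : ℂ) / ((u i : ℂ) - c) ^ 2 = 1}) := by
  have hmain : spectrum ℂ ((multilayerMatrix N g γ H u).map (fun x : ℝ => (x : ℂ))) =
      {c : ℂ | (∀ i, (u i : ℂ) ≠ c) ∧
        ∑ i, (g : ℂ) * (γ i : ℂ) * (H i : ℂ) / ((u i : ℂ) - c) ^ 2 = 1} ∪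
      {c : ℂ | (∃ i, (u i : ℂ) = c) ∧
        1 < (Finset.univ.filter (fun j => (u j : ℂ) = c)).card} := by
    ext c
    rw [Set.mem_union, Set.mem_setOf_eq, Set.mem_setOf_eq]
    exact stmt15_key N hN g hg γ H u hγ hH c
  refine ⟨hmain, fun hinj => ?_⟩
  rw [hmain]
  have hempty : {c : ℂ | (∃ i, (u i : ℂ) = c) ∧
      1 < (Finset.univ.filter (fun j => (u j : ℂ) = c)).card} = ∅ := by
    ext c
    simp only [Set.mem_setOf_eq, Set.mem_empty_iff_false, iff_false, not_and, not_lt]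
    intro _
    refine Finset.card_le_one.mpr fun a ha b hb => ?_
    simp only [Finset.mem_filter, Finset.mem_univ, true_and] at ha hb
    exact hinj (Complex.ofReal_inj.mp (ha.trans hb.symm))
  rw [hempty, Set.union_empty]
end

section
/- Let N ≥ 1, g > 0, γ_i > 0 with Σ_i γ_i = 1, H_i > 0 and ũ_i ∈ ℝ for i = 1,…,N. Set h_N = Σ_{i=1}^N γ_i H_i, ũ₋ = min_i ũ_i, ũ₊ = max_i ũ_i, J₋ = [ũ₋ − √(g h_N), ũ₋), J₊ = (ũ₊, ũ₊ + √(g h_N)], and D_i = { z ∈ ℂ : |z − ũ_i| ≤ √(g h_N) and ũ₋ ≤ Re z ≤ ũ₊ }. Then every complex eigenvalue of A_N lies in J₋ ∪ J₊ ∪ (⋃_{i=1}^N D_i), and there exist exactly one eigenvalue c₋ of A_N in J₋ and exactly one eigenvalue c₊ of A_N in J₊. -/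
/-!
For `z` different from every `ũᵢ`, a Schur complement reduces `det (z - A_N)` to the secular
equation `∑ᵢ g γᵢ Hᵢ / (z - ũᵢ)² = 1`. Taking norms, some `|z - ũᵢ|` is at most `√(g h_N)`.
Outside the strip `ũ₋ ≤ Re z ≤ ũ₊` all `Re (z - ũᵢ)` have the same sign, and then the imaginary
part of the secular function vanishes only if `Im z = 0`. On the real half-line beyond `ũ₊` the
secular function decreases strictly, is `≥ 1` at distance `√(g γᵢ Hᵢ)` from the extreme pole and
`≤ 1` at distance `√(g h_N)`, so it takes the value `1` exactly once in `J₊`; the reflection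
`z ↦ -z`, `ũ ↦ -ũ` gives the same for `J₋`.
-/

open Matrix

def secular {K ι : Type*} [Field K] [Fintype ι] (w u : ι → K) (z : K) : K :=
  ∑ i, w i / (z - u i) ^ 2

section Secular

variable {K ι : Type*} [Field K] [Fintype ι]

theorem secular_neg (w u : ι → K) (z : K) : secular w (-u) (-z) = secular w u z := by
  simp only [secular, Pi.neg_apply]
  congr 1 with i
  ring

theorem nonempty_of_secular_eq_one {w u : ι → K} {z : K} (h : secular w u z = 1) :
    Nonempty ι := by
  by_contra hι
  simp [secular, not_nonempty_iff.mp hι] at h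

theorem secular_ofReal (w u : ι → ℝ) (x : ℝ) :
    secular (fun i => (w i : ℂ)) (fun i => (u i : ℂ)) x = secular w u x := by
  simp [secular]

variable [DecidableEq ι]

theorem det_diagonal_sub_of (d v : ι → K) (hd : ∀ i, d i ≠ 0) :
    det (diagonal d - of fun _ j => v j) = (∏ i, d i) * (1 - ∑ i, v i / d i) := by
  have h : diagonal d - of (fun _ j => v j) =
      diagonal d * (1 + replicateCol Unit (fun i => -(d i)⁻¹) * replicateRow Unit v) := by
    ext i j
    rw [diagonal_mul]
    rcases eq_or_ne i j with rfl | h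
    · simp [mul_apply, mul_add, hd i, sub_eq_add_neg]
    · simp [mul_apply, hd i, h]
  rw [h, det_mul, det_diagonal, det_one_add_replicateCol_mul_replicateRow]
  simp [dotProduct, div_eq_mul_inv, sub_eq_add_neg]

-- Schur complement on the invertible block `diagonal (z - u)`, then the matrix determinant lemma.
theorem det_algebraMap_sub_fromBlocks (u H c : ι → K) {z : K} (hz : ∀ i, z ≠ u i) :
    det (algebraMap K _ z -
        fromBlocks (diagonal u) (diagonal H) (of fun _ j => c j) (diagonal u)) =
      (∏ i, (z - u i)) ^ 2 * (1 - secular (c * H) u z) := by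
  have hd : ∀ i, z - u i ≠ 0 := fun i => sub_ne_zero.mpr (hz i)
  have hinv : diagonal (fun i => (z - u i)⁻¹) * diagonal (fun i => z - u i) = 1 := by
    rw [diagonal_mul_diagonal, ← diagonal_one]
    congr with i
    simp [hd]
  let _ : Invertible (diagonal fun i => z - u i) := invertibleOfLeftInverse _ _ hinv
  have hblocks : algebraMap K (Matrix (ι ⊕ ι) (ι ⊕ ι) K) z -
      fromBlocks (diagonal u) (diagonal H) (of fun _ j => c j) (diagonal u) =
      fromBlocks (diagonal fun i => z - u i) (-diagonal H) (-of fun _ j => c j)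
        (diagonal fun i => z - u i) := by
    ext (i | i) (j | j) <;> rcases eq_or_ne i j with rfl | h <;>
      simp [algebraMap_eq_diagonal, *]
  have hschur : (-of fun _ j => c j : Matrix ι ι K) * diagonal (fun i => (z - u i)⁻¹) *
      -diagonal H = of fun _ j => c j * H j / (z - u j) := by
    ext i j
    simp only [neg_of, diagonal_neg, mul_diagonal, of_apply, Pi.neg_apply, neg_mul, mul_neg,
      neg_neg, div_eq_mul_inv]
    ring
  rw [hblocks, det_fromBlocks₁₁, invOf_eq_left_inv hinv, det_diagonal, hschur,
    det_diagonal_sub_of _ _ hd, secular]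
  simp only [Pi.mul_apply, div_div, ← sq]
  ring

theorem mem_spectrum_fromBlocks_iff (u H c : ι → K) {z : K} (hz : ∀ i, z ≠ u i) :
    z ∈ spectrum K (fromBlocks (diagonal u) (diagonal H) (of fun _ j => c j) (diagonal u)) ↔
      secular (c * H) u z = 1 := by
  rw [spectrum.mem_iff, isUnit_iff_isUnit_det, isUnit_iff_ne_zero, not_not,
    det_algebraMap_sub_fromBlocks u H c hz, mul_eq_zero, or_iff_right, sub_eq_zero, eq_comm]
  exact pow_ne_zero _ (Finset.prod_ne_zero_iff.mpr fun i _ => sub_ne_zero.mpr (hz i))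

end Secular

section ComplexRoots

variable {ι : Type*} [Fintype ι] {w u : ι → ℝ}

theorem im_secular (z : ℂ) :
    (secular (fun i => (w i : ℂ)) (fun i => (u i : ℂ)) z).im =
      -2 * z.im * ∑ i, w i * (z.re - u i) / Complex.normSq (z - u i) ^ 2 := by
  simp only [secular, Complex.im_sum, Finset.mul_sum]
  refine Finset.sum_congr rfl fun i _ => ?_
  rw [div_eq_mul_inv, Complex.im_ofReal_mul, Complex.inv_im, map_pow, pow_two (z - u i),
    Complex.mul_im]
  simp only [Complex.sub_re, Complex.sub_im, Complex.ofReal_re, Complex.ofReal_im, sub_zero]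
  ring

theorem im_eq_zero_of_secular_eq_one_of_lt (hw : ∀ i, 0 < w i) {z : ℂ} (hz : ∀ i, u i < z.re)
    (h : secular (fun i => (w i : ℂ)) (fun i => (u i : ℂ)) z = 1) : z.im = 0 := by
  have := nonempty_of_secular_eq_one h
  have hpos : 0 < ∑ i, w i * (z.re - u i) / Complex.normSq (z - u i) ^ 2 := by
    refine Finset.sum_pos (fun i _ => ?_) Finset.univ_nonempty
    have hzi : 0 < Complex.normSq (z - u i) := Complex.normSq_pos.mpr fun h0 => by
      have := congrArg Complex.re h0
      simp only [Complex.sub_re, Complex.ofReal_re, Complex.zero_re] at this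
      linarith [hz i]
    have := hw i
    have := sub_pos.mpr (hz i)
    positivity
  have him := im_secular (w := w) (u := u) z
  rw [h, Complex.one_im] at him
  nlinarith

theorem im_eq_zero_of_secular_eq_one_of_gt (hw : ∀ i, 0 < w i) {z : ℂ} (hz : ∀ i, z.re < u i)
    (h : secular (fun i => (w i : ℂ)) (fun i => (u i : ℂ)) z = 1) : z.im = 0 := by
  have := im_eq_zero_of_secular_eq_one_of_lt (u := -u) (z := -z) hw
    (fun i => by simpa using hz i) (by rw [← h, ← secular_neg, neg_neg]; congr with i; simp)
  simpa using this

theorem exists_norm_sub_le_sqrt_of_secular_eq_one (hw : ∀ i, 0 < w i) {z : ℂ}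
    (h : secular (fun i => (w i : ℂ)) (fun i => (u i : ℂ)) z = 1) :
    ∃ i, ‖z - u i‖ ≤ √(∑ i, w i) := by
  have := nonempty_of_secular_eq_one h
  by_contra! hfar
  have hR : 0 < ∑ i, w i := Finset.sum_pos (fun i _ => hw i) Finset.univ_nonempty
  have : (1 : ℝ) < 1 := calc
    (1 : ℝ) = ‖secular (fun i => (w i : ℂ)) (fun i => (u i : ℂ)) z‖ := by simp [h]
    _ ≤ ∑ i, w i / ‖z - u i‖ ^ 2 := by
      refine (norm_sum_le _ _).trans_eq (Finset.sum_congr rfl fun i _ => ?_)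
      simp [abs_of_pos (hw i)]
    _ < ∑ i, w i / ∑ j, w j := Finset.sum_lt_sum_of_nonempty Finset.univ_nonempty fun i _ =>
      div_lt_div_of_pos_left (hw i) hR (Real.lt_sq_of_sqrt_lt (hfar i))
    _ = 1 := by rw [← Finset.sum_div, div_self hR.ne']
  exact lt_irrefl _ this

theorem existsUnique_complex_of_real {p : ℂ → Prop} {I : Set ℝ} (h : ∃! x : ℝ, x ∈ I ∧ p x) :
    ∃! c : ℂ, p c ∧ c.im = 0 ∧ c.re ∈ I := by
  obtain ⟨x, ⟨hxI, hpx⟩, huniq⟩ := h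
  refine ⟨x, ⟨hpx, Complex.ofReal_im x, by simpa using hxI⟩, fun c ⟨hpc, him, hre⟩ => ?_⟩
  have hc : c = (c.re : ℂ) := Complex.ext rfl (by simp [him])
  rw [hc, huniq c.re ⟨hre, hc ▸ hpc⟩]

end ComplexRoots

section RealRoots

variable {ι : Type*} [Fintype ι] {w u : ι → ℝ} {i₀ : ι}

theorem secular_strictAntiOn (hw : ∀ i, 0 < w i) (hi₀ : ∀ i, u i ≤ u i₀) :
    StrictAntiOn (secular w u) (Set.Ioi (u i₀)) := by
  intro x hx y hy hxy
  refine Finset.sum_lt_sum_of_nonempty ⟨i₀, Finset.mem_univ _⟩ fun i _ => ?_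
  have hxi : 0 < x - u i := by linarith [hi₀ i, Set.mem_Ioi.mp hx]
  exact div_lt_div_of_pos_left (hw i) (by positivity) (by gcongr)

theorem continuousOn_secular (hi₀ : ∀ i, u i ≤ u i₀) :
    ContinuousOn (secular w u) (Set.Ioi (u i₀)) := by
  refine continuousOn_finsetSum _ fun i _ => continuousOn_const.div (by fun_prop) fun x hx => ?_
  have : 0 < x - u i := by linarith [hi₀ i, Set.mem_Ioi.mp hx]
  positivity

theorem existsUnique_secular_eq_one_Ioc (hw : ∀ i, 0 < w i) (hi₀ : ∀ i, u i ≤ u i₀) :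
    ∃! x, x ∈ Set.Ioc (u i₀) (u i₀ + √(∑ i, w i)) ∧ secular w u x = 1 := by
  have hR : 0 < ∑ i, w i := Finset.sum_pos (fun i _ => hw i) ⟨i₀, Finset.mem_univ _⟩
  set δ := √(w i₀)
  set r := √(∑ i, w i)
  have hδ : 0 < δ := Real.sqrt_pos.mpr (hw i₀)
  have hδr : δ ≤ r := Real.sqrt_le_sqrt <|
    Finset.single_le_sum (fun i _ => (hw i).le) (Finset.mem_univ i₀)
  have hnear : 1 ≤ secular w u (u i₀ + δ) := calc
    1 = w i₀ / (u i₀ + δ - u i₀) ^ 2 := by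
      rw [add_sub_cancel_left, Real.sq_sqrt (hw i₀).le, div_self (hw i₀).ne']
    _ ≤ secular w u (u i₀ + δ) :=
      Finset.single_le_sum (f := fun i => w i / (u i₀ + δ - u i) ^ 2)
        (fun i _ => div_nonneg (hw i).le (sq_nonneg _)) (Finset.mem_univ i₀)
  have hfar : secular w u (u i₀ + r) ≤ 1 := calc
    secular w u (u i₀ + r) ≤ ∑ i, w i / ∑ j, w j := Finset.sum_le_sum fun i _ => by
      have hri : r ≤ u i₀ + r - u i := by linarith [hi₀ i]
      have := pow_le_pow_left₀ (Real.sqrt_nonneg _) hri 2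
      rw [Real.sq_sqrt hR.le] at this
      exact div_le_div_of_nonneg_left (hw i).le hR this
    _ = 1 := by rw [← Finset.sum_div, div_self hR.ne']
  have hsub : Set.Icc (u i₀ + δ) (u i₀ + r) ⊆ Set.Ioi (u i₀) := fun x hx => by
    simp only [Set.mem_Ioi]
    linarith [hx.1]
  obtain ⟨x, hx, hx1⟩ := intermediate_value_Icc' (by linarith)
    ((continuousOn_secular hi₀).mono hsub) ⟨hfar, hnear⟩
  refine ⟨x, ⟨⟨by linarith [hx.1], hx.2⟩, hx1⟩, fun y hy => ?_⟩
  exact (secular_strictAntiOn hw hi₀).injOn hy.1.1 (hsub hx) (hy.2.trans hx1.symm)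

theorem existsUnique_secular_eq_one_Ico (hw : ∀ i, 0 < w i) (hi₀ : ∀ i, u i₀ ≤ u i) :
    ∃! x, x ∈ Set.Ico (u i₀ - √(∑ i, w i)) (u i₀) ∧ secular w u x = 1 := by
  refine (Equiv.neg ℝ).existsUnique_congr (fun x => ?_) |>.mpr
    (existsUnique_secular_eq_one_Ioc (u := -u) hw fun i => neg_le_neg (hi₀ i))
  rw [Equiv.neg_apply, ← secular_neg w u x]
  simp only [Set.mem_Ico, Set.mem_Ioc, Pi.neg_apply]
  constructor <;> rintro ⟨⟨h1, h2⟩, h3⟩ <;> exact ⟨⟨by linarith, by linarith⟩, h3⟩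

end RealRoots

section Multilayer

variable {N : ℕ} {g : ℝ} {γ H u : Fin N → ℝ}

theorem multilayerMatrix_map_ofReal :
    (multilayerMatrix N g γ H u).map (fun x : ℝ => (x : ℂ)) =
      fromBlocks (diagonal fun i => (u i : ℂ)) (diagonal fun i => (H i : ℂ))
        (of fun _ j => ((g * γ j : ℝ) : ℂ)) (diagonal fun i => (u i : ℂ)) := by
  simp only [multilayerMatrix, fromBlocks_map, diagonal_map Complex.ofReal_zero]
  rfl

theorem mem_spectrum_multilayerMatrix_iff {z : ℂ} (hz : ∀ i, z ≠ u i) :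
    z ∈ spectrum ℂ ((multilayerMatrix N g γ H u).map (fun x : ℝ => (x : ℂ))) ↔
      secular (fun i => ((g * γ i * H i : ℝ) : ℂ)) (fun i => (u i : ℂ)) z = 1 := by
  rw [multilayerMatrix_map_ofReal, mem_spectrum_fromBlocks_iff _ _ _ hz]
  simp only [Complex.ofReal_mul]
  rfl

theorem ofReal_mem_spectrum_multilayerMatrix_iff {x : ℝ} (hx : ∀ i, x ≠ u i) :
    (x : ℂ) ∈ spectrum ℂ ((multilayerMatrix N g γ H u).map (fun x : ℝ => (x : ℂ))) ↔
      secular (fun i => g * γ i * H i) u x = 1 := by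
  rw [mem_spectrum_multilayerMatrix_iff fun i => by exact_mod_cast hx i, secular_ofReal]
  exact_mod_cast Iff.rfl

theorem existsUnique_mem_spectrum_multilayerMatrix {I : Set ℝ} (hI : ∀ x ∈ I, ∀ i, x ≠ u i)
    (h : ∃! x, x ∈ I ∧ secular (fun i => g * γ i * H i) u x = 1) :
    ∃! c : ℂ, c ∈ spectrum ℂ ((multilayerMatrix N g γ H u).map (fun x : ℝ => (x : ℂ))) ∧
      c.im = 0 ∧ c.re ∈ I :=
  existsUnique_complex_of_real <| (existsUnique_congr fun x => and_congr_right fun hx =>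
    ofReal_mem_spectrum_multilayerMatrix_iff (hI x hx)).mpr h

theorem spectrum_multilayerMatrix_subset (hw : ∀ i, 0 < g * γ i * H i) {imin imax : Fin N}
    (hmin : ∀ i, u imin ≤ u i) (hmax : ∀ i, u i ≤ u imax) :
    spectrum ℂ ((multilayerMatrix N g γ H u).map (fun x : ℝ => (x : ℂ))) ⊆
      {z : ℂ | z.im = 0 ∧ z.re ∈ Set.Ico (u imin - √(∑ i, g * γ i * H i)) (u imin)} ∪
      {z : ℂ | z.im = 0 ∧ z.re ∈ Set.Ioc (u imax) (u imax + √(∑ i, g * γ i * H i))} ∪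
      (⋃ i : Fin N, {z : ℂ | ‖z - ((u i : ℝ) : ℂ)‖ ≤ √(∑ i, g * γ i * H i) ∧
        u imin ≤ z.re ∧ z.re ≤ u imax}) := by
  intro z hz
  by_cases hzu : ∃ i, z = u i
  · obtain ⟨i, rfl⟩ := hzu
    exact Or.inr (Set.mem_iUnion.mpr ⟨i, by simp [hmin i, hmax i]⟩)
  simp only [not_exists] at hzu
  have hS := (mem_spectrum_multilayerMatrix_iff hzu).mp hz
  obtain ⟨i, hi⟩ := exists_norm_sub_le_sqrt_of_secular_eq_one hw hS
  have hre := abs_le.mp <| (Complex.abs_re_le_norm _).trans (by simpa using hi)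
  simp only [Complex.sub_re, Complex.ofReal_re] at hre
  rcases lt_or_ge z.re (u imin) with hlt | hge
  · refine Or.inl (Or.inl ⟨im_eq_zero_of_secular_eq_one_of_gt hw
      (fun j => hlt.trans_le (hmin j)) hS, by linarith [hmin i], hlt⟩)
  rcases lt_or_ge (u imax) z.re with hgt | hle
  · refine Or.inl (Or.inr ⟨im_eq_zero_of_secular_eq_one_of_lt hw
      (fun j => (hmax j).trans_lt hgt) hS, hgt, by linarith [hmax i]⟩)
  exact Or.inr (Set.mem_iUnion.mpr ⟨i, hi, hge, hle⟩)

end Multilayer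

theorem stmt16_general (N : ℕ) (g : ℝ) (hg : 0 < g)
    (γ H u : Fin N → ℝ) (hγ : ∀ i, 0 < γ i)
    (hH : ∀ i, 0 < H i)
    (hN' um up : ℝ)
    (hhN : hN' = ∑ i, γ i * H i)
    (hum : IsLeast (Set.range u) um) (hup : IsGreatest (Set.range u) up) :
    (spectrum ℂ ((multilayerMatrix N g γ H u).map (fun x : ℝ => (x : ℂ))) ⊆
      {z : ℂ | z.im = 0 ∧ z.re ∈ Set.Ico (um - Real.sqrt (g * hN')) um} ∪
      {z : ℂ | z.im = 0 ∧ z.re ∈ Set.Ioc up (up + Real.sqrt (g * hN'))} ∪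
      (⋃ i : Fin N, {z : ℂ | ‖z - ((u i : ℝ) : ℂ)‖ ≤ Real.sqrt (g * hN') ∧
        um ≤ z.re ∧ z.re ≤ up})) ∧
    (∃! c : ℂ, c ∈ spectrum ℂ ((multilayerMatrix N g γ H u).map (fun x : ℝ => (x : ℂ))) ∧
      c.im = 0 ∧ c.re ∈ Set.Ico (um - Real.sqrt (g * hN')) um) ∧
    (∃! c : ℂ, c ∈ spectrum ℂ ((multilayerMatrix N g γ H u).map (fun x : ℝ => (x : ℂ))) ∧
      c.im = 0 ∧ c.re ∈ Set.Ioc up (up + Real.sqrt (g * hN'))) := by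
  obtain ⟨imin, rfl⟩ := hum.1
  obtain ⟨imax, rfl⟩ := hup.1
  have hmin : ∀ i, u imin ≤ u i := fun i => hum.2 ⟨i, rfl⟩
  have hmax : ∀ i, u i ≤ u imax := fun i => hup.2 ⟨i, rfl⟩
  have hw : ∀ i, 0 < g * γ i * H i := fun i => mul_pos (mul_pos hg (hγ i)) (hH i)
  have hgh : g * hN' = ∑ i, g * γ i * H i := by simp only [hhN, Finset.mul_sum, mul_assoc]
  rw [hgh]
  exact ⟨spectrum_multilayerMatrix_subset hw hmin hmax,
    existsUnique_mem_spectrum_multilayerMatrix (fun _ hx i => (hx.2.trans_le (hmin i)).ne)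
      (existsUnique_secular_eq_one_Ico hw hmin),
    existsUnique_mem_spectrum_multilayerMatrix (fun _ hx i => ((hmax i).trans_lt hx.1).ne')
      (existsUnique_secular_eq_one_Ioc hw hmax)⟩

/-- Every complex eigenvalue of `A_N` lies in
`J₋ ∪ J₊ ∪ ⋃ᵢ Dᵢ`, where `J₋ = [ũ₋ - √(g h_N), ũ₋)`, `J₊ = (ũ₊, ũ₊ + √(g h_N)]` and
`Dᵢ = {z : |z - ũᵢ| ≤ √(g h_N), ũ₋ ≤ Re z ≤ ũ₊}`; moreover there is exactly one
eigenvalue in `J₋` and exactly one in `J₊`. -/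
theorem stmt16 (N : ℕ) (hN : 1 ≤ N) (g : ℝ) (hg : 0 < g)
    (γ H u : Fin N → ℝ) (hγ : ∀ i, 0 < γ i) (hγsum : ∑ i, γ i = 1)
    (hH : ∀ i, 0 < H i)
    (hN' um up : ℝ)
    (hhN : hN' = ∑ i, γ i * H i)
    (hum : IsLeast (Set.range u) um) (hup : IsGreatest (Set.range u) up) :
    (spectrum ℂ ((multilayerMatrix N g γ H u).map (fun x : ℝ => (x : ℂ))) ⊆
      {z : ℂ | z.im = 0 ∧ z.re ∈ Set.Ico (um - Real.sqrt (g * hN')) um} ∪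
      {z : ℂ | z.im = 0 ∧ z.re ∈ Set.Ioc up (up + Real.sqrt (g * hN'))} ∪
      (⋃ i : Fin N, {z : ℂ | ‖z - ((u i : ℝ) : ℂ)‖ ≤ Real.sqrt (g * hN') ∧
        um ≤ z.re ∧ z.re ≤ up})) ∧
    (∃! c : ℂ, c ∈ spectrum ℂ ((multilayerMatrix N g γ H u).map (fun x : ℝ => (x : ℂ))) ∧
      c.im = 0 ∧ c.re ∈ Set.Ico (um - Real.sqrt (g * hN')) um) ∧
    (∃! c : ℂ, c ∈ spectrum ℂ ((multilayerMatrix N g γ H u).map (fun x : ℝ => (x : ℂ))) ∧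
      c.im = 0 ∧ c.re ∈ Set.Ioc up (up + Real.sqrt (g * hN'))) :=
  stmt16_general N g hg γ H u hγ hH hN' um up hhN hum hup
end
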